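/- arXiv:2409.19093 — 8 statements merged into one kernel-verified Lean document; each statement's English description precedes it below -/
import Mathlib

section
/- Let B be a commutative ring with unit, M an s×n matrix over B and b an s×1 column vector over B. Suppose the augmented matrix (M|b) has rank r (i.e., all (r+1)-minors vanish and some r-minor is nonzero or r is the stated rank), and let Δ ∈ B be an r-minor of M. Then the linear system M·x = Δ·b has a solution ξ = (ξ_1,…,ξ_n) ∈ B^n, and moreover the solution can be chosen so that each ξ_i lies in the ideal generated by b_1,…,b_s. -/
lemma det_mem_of_col {B : Type*} [CommRing B] {m : ℕ} (A : Matrix (Fin m) (Fin m) B)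
    (I : Ideal B) (m₀ : Fin m) (h : ∀ l, A l m₀ ∈ I) : A.det ∈ I := by
  rw [Matrix.det_apply]
  refine Submodule.sum_mem _ fun σ _ => zsmul_mem ?_ _
  rw [← Finset.mul_prod_erase _ _ (Finset.mem_univ m₀)]
  exact Ideal.mul_mem_right _ _ (h _)

/-- **Lemma (linear systems over commutative rings).**
Let `B` be a commutative ring, `M` an `s × n` matrix and `b` a column vector of size `s`
over `B`.  Suppose the augmented matrix `(M | b)` has rank `r`, i.e. all of its
`(r+1)`-minors vanish (and `r` is the stated rank, witnessed by the `r`-minor below),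
and let `Δ` be an `r`-minor of `M`.  Then the system `M · x = Δ · b` has a solution
`ξ ∈ Bⁿ`, which moreover can be chosen with every `ξ i` in the ideal generated by
`b 1, …, b s`. -/
theorem linear_system_solution_of_rank
    (B : Type*) [CommRing B] (s n r : ℕ)
    (M : Matrix (Fin s) (Fin n) B) (b : Fin s → B)
    (Aug : Matrix (Fin s) (Fin (n + 1)) B)
    (hAug : ∀ i j, Aug i j = if h : (j : ℕ) < n then M i ⟨j, h⟩ else b i)
    -- all `(r+1)`-minors of the augmented matrix vanish
    (hminors : ∀ (rows : Fin (r + 1) → Fin s) (cols : Fin (r + 1) → Fin (n + 1)),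
      (Aug.submatrix rows cols).det = 0)
    -- `Δ` is an `r`-minor of `M`
    (rows : Fin r → Fin s) (cols : Fin r → Fin n)
    (hrows : Function.Injective rows) (hcols : Function.Injective cols)
    (Δ : B) (hΔ : Δ = (M.submatrix rows cols).det) :
    ∃ ξ : Fin n → B, M.mulVec ξ = Δ • b ∧
      ∀ i, ξ i ∈ Ideal.span (Set.range b) := by
  classical
  -- augmented column selection
  set colsA : Fin (r + 1) → Fin (n + 1) :=
    Fin.snoc (fun t => (cols t).castSucc) (Fin.last n) with hcolsA
  -- the cofactor matrices (independent of the extra row)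
  set Q : Fin r → Matrix (Fin r) (Fin r) B :=
    fun k => Aug.submatrix rows (fun m => colsA ((Fin.castSucc k).succAbove m)) with hQ
  set c : Fin r → B := fun k => (-1 : B) ^ ((r : ℕ) + (k : ℕ) + 1) * (Q k).det with hc
  refine ⟨fun j => ∑ k : Fin r, if cols k = j then c k else 0, ?_, ?_⟩
  · funext i
    have hN := hminors (Fin.snoc rows i) colsA
    rw [Matrix.det_succ_row _ (Fin.last r), Fin.sum_univ_castSucc] at hN
    -- simplify the last term
    have hlast : Aug.submatrix (Fin.snoc rows i) colsA (Fin.last r) (Fin.last r) = b i := by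
      simp [Matrix.submatrix_apply, hcolsA, hAug]
    have hΔ' : ((Aug.submatrix (Fin.snoc rows i) colsA).submatrix
        (Fin.last r).succAbove (Fin.last r).succAbove).det = Δ := by
      rw [hΔ]
      congr 1
      ext l m
      simp [Matrix.submatrix_apply, Fin.succAbove_last, hcolsA, hAug]
    have hMk : ∀ k : Fin r, Aug.submatrix (Fin.snoc rows i) colsA (Fin.last r) (Fin.castSucc k)
        = M i (cols k) := by
      intro k
      simp [Matrix.submatrix_apply, hcolsA, hAug]
    have hQk : ∀ k : Fin r, ((Aug.submatrix (Fin.snoc rows i) colsA).submatrix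
        (Fin.last r).succAbove (Fin.castSucc k).succAbove) = Q k := by
      intro k
      ext l m
      simp [Matrix.submatrix_apply, Fin.succAbove_last, hQ]
    simp only [hlast, hΔ', hMk, hQk] at hN
    simp only [Fin.val_last, Fin.coe_castSucc] at hN
    have h3 : (-1 : B) ^ (r + r) = 1 := by
      rw [← two_mul, pow_mul]; simp
    rw [h3, one_mul] at hN
    have h2 : ∀ k : Fin r, M i (cols k) * c k
        = -((-1 : B) ^ (r + (k : ℕ)) * M i (cols k) * (Q k).det) := by
      intro k; simp only [hc]; ring
    have key : ∑ k : Fin r, M i (cols k) * c k = Δ * b i := by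
      rw [Finset.sum_congr rfl fun k _ => h2 k, Finset.sum_neg_distrib]
      linear_combination -hN
    rw [Matrix.mulVec, Pi.smul_apply, dotProduct, smul_eq_mul, ← key]
    simp only [Finset.mul_sum, mul_ite, mul_zero]
    rw [Finset.sum_comm]
    refine Finset.sum_congr rfl fun k _ => ?_
    rw [Finset.sum_ite_eq]
    simp
  · intro j
    refine Submodule.sum_mem _ fun k _ => ?_
    split
    · refine Ideal.mul_mem_left _ _ (det_mem_of_col _ _ ⟨r - 1, by have := k.isLt; omega⟩ fun l => ?_)
      have hk : (k : ℕ) < r := k.isLt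
      have hm : (Fin.castSucc k).succAbove ⟨r - 1, by omega⟩ = Fin.last r := by
        rw [Fin.succAbove]
        rw [if_neg]
        · ext; simp; omega
        · simp [Fin.lt_def]; omega
      simp only [hQ, Matrix.submatrix_apply, hm, hcolsA, Fin.snoc_last]
      rw [hAug]
      rw [dif_neg (by simp)]
      exact Ideal.subset_span ⟨rows l, rfl⟩
    · exact Submodule.zero_mem _
end

section
/- Let k be a ring, A a reduced Noetherian k-algebra and P a minimal prime of A. Then every Hasse–Schmidt derivation D ∈ HS_k(A;m) is P-logarithmic, i.e., D_α(P) ⊆ P for all α ≤ m; in particular D induces a Hasse–Schmidt derivation of A/P over k. -/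
open scoped BigOperators

section HS
variable (k A : Type*) [CommRing k] [CommRing A] [Algebra k A]

/-- `D` is a Hasse–Schmidt derivation of `A` over `k` of length `m`
(`m = ⊤` means length `∞`): `D 0 = id` and the Leibniz rule holds in each degree `≤ m`. -/
def IsHSDeriv (m : ℕ∞) (D : ℕ → A →ₗ[k] A) : Prop :=
  D 0 = LinearMap.id ∧
  ∀ α : ℕ, (α : ℕ∞) ≤ m → ∀ x y : A,
    D α (x * y) = ∑ ij ∈ Finset.HasAntidiagonal.antidiagonal α, D ij.1 x * D ij.2 y

/-- A derivation is `m`-integrable if it extends to a Hasse–Schmidt derivation of length `m`. -/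
def IsIntegrable (m : ℕ∞) (δ : Derivation k A A) : Prop :=
  ∃ D : ℕ → A →ₗ[k] A, IsHSDeriv k A m D ∧ D 1 = δ.toLinearMap

/-- The set of leaps of `A` over `k`: those `s ≥ 2` where some derivation is
`(s-1)`-integrable but not `s`-integrable. -/
def LeapSet : Set ℕ :=
  {s | 2 ≤ s ∧ ∃ δ : Derivation k A A,
    IsIntegrable k A ((s - 1 : ℕ) : ℕ∞) δ ∧ ¬ IsIntegrable k A (s : ℕ∞) δ}

end HS

/-- In a reduced ring, every element of a minimal prime is annihilated by some
element outside the prime. -/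
lemma exists_mul_eq_zero_of_mem_minimalPrime
    {A : Type*} [CommRing A] [IsReduced A]
    {P : Ideal A} (hP : P ∈ minimalPrimes A) {x : A} (hx : x ∈ P) :
    ∃ s ∉ P, s * x = 0 := by
  haveI : P.IsPrime := hP.1.1
  set L := Localization.AtPrime P
  have hnil : IsNilpotent (algebraMap A L x) := by
    rw [← mem_nilradical, nilradical_eq_sInf]
    refine Submodule.mem_sInf.2 fun Q hQ => ?_
    have hQp : Ideal.IsPrime Q := hQ
    set q := Ideal.comap (algebraMap A L) Q with hq
    have hqP : q ≤ P := by
      intro s hs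
      by_contra hsP
      have hu : IsUnit (algebraMap A L s) :=
        IsLocalization.map_units L (⟨s, hsP⟩ : P.primeCompl)
      exact hQp.ne_top
        (Ideal.eq_top_of_isUnit_mem _ hs hu)
    have hPq : P ≤ q := hP.2 ⟨hQp.comap _, bot_le⟩ hqP
    exact hPq hx
  have hx0 : algebraMap A L x = 0 := hnil.eq_zero
  obtain ⟨⟨s, hs⟩, h⟩ :=
    (IsLocalization.map_eq_zero_iff P.primeCompl L x).mp hx0
  exact ⟨s, hs, h⟩

/-- **HS-derivations of a reduced Noetherian algebra are logarithmic along minimal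
primes.**  If `A` is a reduced Noetherian `k`-algebra and `P` a minimal prime of `A`,
then every Hasse–Schmidt derivation of length `m` maps `P` into `P` (hence induces a
Hasse–Schmidt derivation of `A/P` over `k`). -/
theorem hs_logarithmic_along_minimal_prime
    (k A : Type*) [CommRing k] [CommRing A] [Algebra k A]
    [IsReduced A] [IsNoetherianRing A]
    (P : Ideal A) (hP : P ∈ minimalPrimes A)
    (m : ℕ∞) (D : ℕ → A →ₗ[k] A) (hD : IsHSDeriv k A m D) :
    ∀ α : ℕ, (α : ℕ∞) ≤ m → ∀ x ∈ P, D α x ∈ P := by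
  intro α
  induction α using Nat.strong_induction_on with
  | _ α IH =>
    intro hα x hx
    obtain ⟨s, hs, hsx⟩ := exists_mul_eq_zero_of_mem_minimalPrime hP hx
    have h0 := hD.2 α hα s x
    rw [hsx, map_zero] at h0
    have hmem : ((0 : ℕ), α) ∈ Finset.HasAntidiagonal.antidiagonal α := by simp
    rw [← Finset.add_sum_erase _ _ hmem] at h0
    have hsum : ∑ ij ∈ (Finset.HasAntidiagonal.antidiagonal α).erase (0, α),
        D ij.1 s * D ij.2 x ∈ P := by
      refine Ideal.sum_mem _ fun ij hij => ?_
      have hij' := Finset.HasAntidiagonal.mem_antidiagonal.mp (Finset.mem_of_mem_erase hij)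
      have hne := Finset.ne_of_mem_erase hij
      have h1 : ij.1 ≠ 0 := by
        intro h1
        exact hne (Prod.ext h1 (by omega))
      have hjlt : ij.2 < α := by omega
      have hjle : (ij.2 : ℕ∞) ≤ m :=
        le_trans (by exact_mod_cast hjlt.le) hα
      exact Ideal.mul_mem_left _ _ (IH ij.2 hjlt hjle x hx)
    have hD0 : D 0 s = s := by rw [hD.1]; rfl
    have hkey : s * D α x ∈ P := by
      have heq : D 0 s * D α x =
          -∑ ij ∈ (Finset.HasAntidiagonal.antidiagonal α).erase (0, α), D ij.1 s * D ij.2 x :=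
        eq_neg_of_add_eq_zero_left h0.symm
      rw [hD0] at heq
      rw [heq]
      exact neg_mem hsum
    exact (hP.1.1.mem_or_mem hkey).resolve_left hs
end

section
/- Let k be a commutative ring and A a commutative k-algebra. For each m ∈ ℕ ∪ {∞}, the set IDer_k(A;m) of m-integrable k-derivations of A (derivations δ such that there exists a Hasse–Schmidt derivation D of length m with D_1 = δ) is an A-submodule of Der_k(A). -/
open scoped BigOperators

open Finset

lemma conv_sum {R : Type*} [CommRing R] (f g : ℕ → ℕ → R) (α : ℕ) :
    ∑ ij ∈ antidiagonal α, ∑ pq ∈ antidiagonal ij.2, ∑ ab ∈ antidiagonal ij.1,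
      f ab.1 pq.1 * g ab.2 pq.2
    = ∑ uv ∈ antidiagonal α, (∑ ap ∈ antidiagonal uv.1, f ap.1 ap.2) *
        (∑ bq ∈ antidiagonal uv.2, g bq.1 bq.2) := by
  have hR : ∀ uv ∈ antidiagonal α, (∑ ap ∈ antidiagonal uv.1, f ap.1 ap.2) *
        (∑ bq ∈ antidiagonal uv.2, g bq.1 bq.2)
      = ∑ ap ∈ antidiagonal uv.1, ∑ bq ∈ antidiagonal uv.2, f ap.1 ap.2 * g bq.1 bq.2 := by
    intro uv _; rw [Finset.sum_mul_sum]
  rw [Finset.sum_congr rfl hR]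
  have hL : ∀ ij ∈ antidiagonal α,
      (∑ pq ∈ antidiagonal ij.2, ∑ ab ∈ antidiagonal ij.1, f ab.1 pq.1 * g ab.2 pq.2)
      = ∑ x ∈ antidiagonal ij.2 ×ˢ antidiagonal ij.1, f x.2.1 x.1.1 * g x.2.2 x.1.2 := by
    intro ij _; rw [Finset.sum_product]
  have hR2 : ∀ uv ∈ antidiagonal α,
      (∑ ap ∈ antidiagonal uv.1, ∑ bq ∈ antidiagonal uv.2, f ap.1 ap.2 * g bq.1 bq.2)
      = ∑ x ∈ antidiagonal uv.1 ×ˢ antidiagonal uv.2, f x.1.1 x.1.2 * g x.2.1 x.2.2 := by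
    intro uv _; rw [Finset.sum_product]
  rw [Finset.sum_congr rfl hL, Finset.sum_congr rfl hR2,
    Finset.sum_sigma', Finset.sum_sigma']
  refine Finset.sum_nbij'
    (fun z => ⟨(z.2.2.1 + z.2.1.1, z.2.2.2 + z.2.1.2), ((z.2.2.1, z.2.1.1), (z.2.2.2, z.2.1.2))⟩)
    (fun z => ⟨(z.2.1.1 + z.2.2.1, z.2.1.2 + z.2.2.2), ((z.2.1.2, z.2.2.2), (z.2.1.1, z.2.2.1))⟩)
    ?_ ?_ ?_ ?_ ?_
  · rintro ⟨⟨i, j⟩, ⟨⟨p, q⟩, ⟨a, b⟩⟩⟩ h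
    simp only [Finset.mem_sigma, Finset.mem_product, Finset.HasAntidiagonal.mem_antidiagonal] at h ⊢
    exact ⟨by omega, trivial, trivial⟩
  · rintro ⟨⟨u, v⟩, ⟨⟨a, p⟩, ⟨b, q⟩⟩⟩ h
    simp only [Finset.mem_sigma, Finset.mem_product, Finset.HasAntidiagonal.mem_antidiagonal] at h ⊢
    exact ⟨by omega, trivial, trivial⟩
  · rintro ⟨⟨i, j⟩, ⟨⟨p, q⟩, ⟨a, b⟩⟩⟩ h
    simp only [Finset.mem_sigma, Finset.mem_product, Finset.HasAntidiagonal.mem_antidiagonal] at h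
    obtain ⟨hij, hpq, hab⟩ := h
    obtain rfl : i = a + b := by omega
    obtain rfl : j = p + q := by omega
    rfl
  · rintro ⟨⟨u, v⟩, ⟨⟨a, p⟩, ⟨b, q⟩⟩⟩ h
    simp only [Finset.mem_sigma, Finset.mem_product, Finset.HasAntidiagonal.mem_antidiagonal] at h
    obtain ⟨huv, hap, hbq⟩ := h
    obtain rfl : u = a + p := by omega
    obtain rfl : v = b + q := by omega
    rfl
  · rintro ⟨⟨i, j⟩, ⟨⟨p, q⟩, ⟨a, b⟩⟩⟩ h
    rfl

section closure
variable {k A : Type*} [CommRing k] [CommRing A] [Algebra k A] {m : ℕ∞}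

lemma isIntegrable_zero : IsIntegrable k A m (0 : Derivation k A A) := by
  refine ⟨fun n => if n = 0 then LinearMap.id else 0, ⟨rfl, ?_⟩, by simp⟩
  intro α hα x y
  rcases Nat.eq_zero_or_pos α with rfl | hpos
  · simp
  · have h0 : (α ≠ 0) := hpos.ne'
    simp only [if_neg h0, LinearMap.zero_apply]
    refine (Finset.sum_eq_zero ?_).symm
    rintro ⟨i, j⟩ hij
    rw [Finset.HasAntidiagonal.mem_antidiagonal] at hij
    rcases Nat.eq_zero_or_pos j with rfl | hj
    · have : i ≠ 0 := by omega
      simp [this]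
    · have : j ≠ 0 := hj.ne'
      simp [this]

lemma isIntegrable_add {δ ε : Derivation k A A} (hδ : IsIntegrable k A m δ)
    (hε : IsIntegrable k A m ε) : IsIntegrable k A m (δ + ε) := by
  obtain ⟨D, hD, hD1⟩ := hδ
  obtain ⟨E, hE, hE1⟩ := hε
  refine ⟨fun n => ∑ ij ∈ antidiagonal n, D ij.1 ∘ₗ E ij.2, ⟨?_, ?_⟩, ?_⟩
  · simp [hD.1, hE.1]
  · intro α hα x y
    have key : ∀ ij ∈ antidiagonal α, (D ij.1 ∘ₗ E ij.2) (x * y)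
        = ∑ pq ∈ antidiagonal ij.2, ∑ ab ∈ antidiagonal ij.1,
            D ab.1 (E pq.1 x) * D ab.2 (E pq.2 y) := by
      rintro ⟨i, j⟩ hij
      rw [Finset.HasAntidiagonal.mem_antidiagonal] at hij
      have hi : (i : ℕ∞) ≤ m := le_trans (by exact_mod_cast Nat.le.intro hij) hα
      have hj : (j : ℕ∞) ≤ m :=
        le_trans (by exact_mod_cast Nat.le.intro (by omega : j + i = α)) hα
      simp only [LinearMap.comp_apply]
      rw [hE.2 j hj x y, map_sum]
      exact Finset.sum_congr rfl fun pq _ => hD.2 i hi _ _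
    rw [LinearMap.sum_apply, Finset.sum_congr rfl key,
      conv_sum (fun a p => D a (E p x)) (fun b q => D b (E q y)) α]
    refine Finset.sum_congr rfl fun uv _ => ?_
    rw [LinearMap.sum_apply, LinearMap.sum_apply]
    rfl
  · ext x
    have h1 : antidiagonal 1 = {(0, 1), (1, 0)} := rfl
    simp [h1, hD.1, hE.1, hD1, hE1, add_comm]

lemma isIntegrable_smul (a : A) {δ : Derivation k A A} (hδ : IsIntegrable k A m δ) :
    IsIntegrable k A m (a • δ) := by
  obtain ⟨D, hD, hD1⟩ := hδ
  refine ⟨fun n => a ^ n • D n, ⟨?_, ?_⟩, ?_⟩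
  · simp [hD.1]
  · intro α hα x y
    simp only [LinearMap.smul_apply]
    rw [hD.2 α hα x y, Finset.smul_sum]
    refine Finset.sum_congr rfl fun ij hij => ?_
    rw [Finset.HasAntidiagonal.mem_antidiagonal] at hij
    rw [← hij, pow_add, smul_eq_mul, smul_eq_mul, smul_eq_mul]
    ring
  · ext x
    simp [hD1]

end closure


/-- **`m`-integrable derivations form an `A`-submodule of `Der_k(A)`.**  For every
`m ∈ ℕ ∪ {∞}` there is an `A`-submodule of the module of `k`-derivations of `A` whose
members are exactly the `m`-integrable derivations. -/
theorem ider_is_submodule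
    (k A : Type*) [CommRing k] [CommRing A] [Algebra k A] (m : ℕ∞) :
    ∃ S : Submodule A (Derivation k A A),
      ∀ δ : Derivation k A A, δ ∈ S ↔ IsIntegrable k A m δ := by
  refine ⟨{ carrier := {δ | IsIntegrable k A m δ}
            add_mem' := fun h1 h2 => isIntegrable_add h1 h2
            zero_mem' := isIntegrable_zero
            smul_mem' := fun a δ h => isIntegrable_smul a h }, fun δ => Iff.rfl⟩
end

section
/- Let k be a ring and A a k-algebra. Suppose δ_1, …, δ_r ∈ Der_k(A) are derivations such that δ_i leaps at s_i (i.e., δ_i is (s_i−1)-integrable but not s_i-integrable) with s_1 < s_2 < … < s_r. Let M = { Σ_{i=1}^r λ_i δ_i : each λ_i is a unit of A or zero }. Then every nonzero δ ∈ M which leaps, leaps at one of s_1, …, s_r; i.e., the only leaps produced by M are s_1, …, s_r. -/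
open scoped BigOperators

section Aux
open Finset

variable {k A : Type*} [CommRing k] [CommRing A] [Algebra k A]

/-- Resummation of a quadruple antidiagonal sum. -/
private lemma quad_sum {M : Type*} [AddCommMonoid M] (α : ℕ) (g : ℕ → ℕ → ℕ → ℕ → M) :
    (∑ ab ∈ antidiagonal α, ∑ cd ∈ antidiagonal ab.2, ∑ pq ∈ antidiagonal ab.1,
      g pq.1 cd.1 pq.2 cd.2)
    = ∑ ij ∈ antidiagonal α, ∑ pc ∈ antidiagonal ij.1, ∑ qd ∈ antidiagonal ij.2,
      g pc.1 pc.2 qd.1 qd.2 := by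
  simp only [Finset.sum_sigma']
  refine Finset.sum_nbij'
    (fun x => ⟨(x.2.2.1 + x.2.1.1, x.2.2.2 + x.2.1.2), ⟨(x.2.2.1, x.2.1.1), (x.2.2.2, x.2.1.2)⟩⟩)
    (fun y => ⟨(y.2.1.1 + y.2.2.1, y.2.1.2 + y.2.2.2), ⟨(y.2.1.2, y.2.2.2), (y.2.1.1, y.2.2.1)⟩⟩)
    ?_ ?_ ?_ ?_ ?_
  · rintro ⟨⟨a, b⟩, ⟨c, d⟩, p, q⟩ hx
    obtain ⟨h1, h2⟩ := Finset.mem_sigma.mp hx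
    obtain ⟨h2, h3⟩ := Finset.mem_sigma.mp h2
    rw [Finset.HasAntidiagonal.mem_antidiagonal] at h1 h2 h3
    dsimp only at h1 h2 h3 ⊢
    refine Finset.mem_sigma.mpr ⟨?_, Finset.mem_sigma.mpr ⟨?_, ?_⟩⟩ <;>
      simp only [Finset.HasAntidiagonal.mem_antidiagonal] <;> omega
  · rintro ⟨⟨i, j⟩, ⟨p, c⟩, q, e⟩ hy
    obtain ⟨h1, h2⟩ := Finset.mem_sigma.mp hy
    obtain ⟨h2, h3⟩ := Finset.mem_sigma.mp h2
    rw [Finset.HasAntidiagonal.mem_antidiagonal] at h1 h2 h3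
    dsimp only at h1 h2 h3 ⊢
    refine Finset.mem_sigma.mpr ⟨?_, Finset.mem_sigma.mpr ⟨?_, ?_⟩⟩ <;>
      simp only [Finset.HasAntidiagonal.mem_antidiagonal] <;> omega
  · rintro ⟨⟨a, b⟩, ⟨c, d⟩, p, q⟩ hx
    obtain ⟨h1, h2⟩ := Finset.mem_sigma.mp hx
    obtain ⟨h2, h3⟩ := Finset.mem_sigma.mp h2
    rw [Finset.HasAntidiagonal.mem_antidiagonal] at h1 h2 h3
    have ha : p + q = a := h3
    have hb : c + d = b := h2
    subst ha hb
    rfl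
  · rintro ⟨⟨i, j⟩, ⟨p, c⟩, q, e⟩ hy
    obtain ⟨h1, h2⟩ := Finset.mem_sigma.mp hy
    obtain ⟨h2, h3⟩ := Finset.mem_sigma.mp h2
    rw [Finset.HasAntidiagonal.mem_antidiagonal] at h1 h2 h3
    have hi : p + c = i := h2
    have hj : q + e = j := h3
    subst hi hj
    rfl
  · rintro ⟨⟨a, b⟩, ⟨c, d⟩, p, q⟩ hx
    rfl

private lemma hs_mono {m m' : ℕ∞} (h : m' ≤ m) {D : ℕ → A →ₗ[k] A}
    (hD : IsHSDeriv k A m D) : IsHSDeriv k A m' D :=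
  ⟨hD.1, fun α hα x y => hD.2 α (le_trans hα h) x y⟩

private lemma integrable_mono {m m' : ℕ∞} (h : m' ≤ m) {δ : Derivation k A A}
    (hδ : IsIntegrable k A m δ) : IsIntegrable k A m' δ := by
  obtain ⟨D, hD, hD1⟩ := hδ
  exact ⟨D, hs_mono h hD, hD1⟩

private lemma integrable_zero (m : ℕ∞) : IsIntegrable k A m (0 : Derivation k A A) := by
  refine ⟨fun n => if n = 0 then LinearMap.id else 0, ⟨if_pos rfl, ?_⟩, by simp⟩
  intro α _ x y
  dsimp only
  rcases Nat.eq_zero_or_pos α with hα | hα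
  · subst hα
    simp
  · rw [if_neg (Nat.pos_iff_ne_zero.mp hα), eq_comm]
    refine Finset.sum_eq_zero ?_
    rintro ⟨i, j⟩ hij
    rw [Finset.HasAntidiagonal.mem_antidiagonal] at hij
    rcases Nat.eq_zero_or_pos j with hj | hj
    · have : i ≠ 0 := by omega
      simp [this]
    · have : j ≠ 0 := Nat.pos_iff_ne_zero.mp hj
      simp [this]

private lemma integrable_smul {m : ℕ∞} {u : A} (hu : IsUnit u) {δ : Derivation k A A}
    (hδ : IsIntegrable k A m δ) : IsIntegrable k A m (u • δ) := by
  obtain ⟨D, ⟨hD0, hDL⟩, hD1⟩ := hδ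
  refine ⟨fun n => u ^ n • D n, ⟨by simpa using hD0, ?_⟩, by simp [hD1]⟩
  intro α hα x y
  simp only [LinearMap.smul_apply]
  rw [hDL α hα x y, Finset.smul_sum]
  refine Finset.sum_congr rfl ?_
  rintro ⟨i, j⟩ hij
  rw [Finset.HasAntidiagonal.mem_antidiagonal] at hij
  subst hij
  simp only [smul_eq_mul, pow_add]
  ring

private lemma integrable_add {m : ℕ∞} {δ ε : Derivation k A A}
    (hδ : IsIntegrable k A m δ) (hε : IsIntegrable k A m ε) :
    IsIntegrable k A m (δ + ε) := by
  classical
  obtain ⟨D, ⟨hD0, hDL⟩, hD1⟩ := hδ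
  obtain ⟨E, ⟨hE0, hEL⟩, hE1⟩ := hε
  refine ⟨fun n => ∑ ab ∈ Finset.HasAntidiagonal.antidiagonal n, (D ab.1) ∘ₗ (E ab.2), ⟨?_, ?_⟩, ?_⟩
  · simp [hD0, hE0]
  · intro α hα x y
    have key : ∀ ab : ℕ × ℕ, ab ∈ Finset.HasAntidiagonal.antidiagonal α →
        ((D ab.1) ∘ₗ (E ab.2)) (x * y)
          = ∑ cd ∈ Finset.HasAntidiagonal.antidiagonal ab.2, ∑ pq ∈ Finset.HasAntidiagonal.antidiagonal ab.1,
              D pq.1 (E cd.1 x) * D pq.2 (E cd.2 y) := by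
      rintro ⟨a, b⟩ hab
      rw [Finset.HasAntidiagonal.mem_antidiagonal] at hab
      have hbm : (b : ℕ∞) ≤ m :=
        le_trans (Nat.cast_le.mpr (by omega : b ≤ α)) hα
      have ham : (a : ℕ∞) ≤ m :=
        le_trans (Nat.cast_le.mpr (by omega : a ≤ α)) hα
      simp only [LinearMap.comp_apply]
      rw [hEL b hbm x y, map_sum]
      refine Finset.sum_congr rfl ?_
      rintro ⟨c, d⟩ _
      exact hDL a ham _ _
    dsimp only
    simp only [LinearMap.sum_apply]
    rw [Finset.sum_congr rfl key]
    refine (quad_sum α fun p c q d => D p (E c x) * D q (E d y)).trans ?_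
    refine Finset.sum_congr rfl ?_
    rintro ⟨i, j⟩ _
    rw [Finset.sum_mul_sum]
    rfl
  · show ∑ ab ∈ Finset.HasAntidiagonal.antidiagonal 1, (D ab.1) ∘ₗ (E ab.2) = _
    have h1 : (Finset.HasAntidiagonal.antidiagonal 1 : Finset (ℕ × ℕ)) = {(0, 1), (1, 0)} := by decide
    rw [h1, Finset.sum_pair (by decide)]
    rw [Derivation.coe_add_linearMap, hD0, hE0, hD1, hE1,
      LinearMap.id_comp, LinearMap.comp_id, add_comm]

private lemma integrable_neg {m : ℕ∞} {δ : Derivation k A A}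
    (hδ : IsIntegrable k A m δ) : IsIntegrable k A m (-δ) := by
  have := integrable_smul (u := (-1 : A)) (isUnit_one.neg) hδ
  rwa [neg_one_smul] at this

private lemma integrable_sum {m : ℕ∞} {ι : Type*} (S : Finset ι) (f : ι → Derivation k A A)
    (hf : ∀ i ∈ S, IsIntegrable k A m (f i)) :
    IsIntegrable k A m (∑ i ∈ S, f i) := by
  classical
  induction S using Finset.induction_on with
  | empty => simpa using integrable_zero m
  | insert _ _ hnot ih =>
      rw [Finset.sum_insert hnot]
      exact integrable_add (hf _ (Finset.mem_insert_self _ _))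
        (ih fun i hi => hf i (Finset.mem_insert_of_mem hi))

end Aux

section Leaps
variable (k A : Type*) [CommRing k] [CommRing A] [Algebra k A]

/-- A derivation leaps at `s` if it is `(s-1)`-integrable but not `s`-integrable. -/
def LeapsAt (s : ℕ) (δ : Derivation k A A) : Prop :=
  IsIntegrable k A ((s - 1 : ℕ) : ℕ∞) δ ∧ ¬ IsIntegrable k A (s : ℕ∞) δ

/-- **The only leaps produced by unit-combinations of leaping derivations are the given
ones.**  If `δ₁, …, δᵣ` leap at `s₁ < … < sᵣ`, then any nonzero derivation of the form
`∑ λᵢ δᵢ` with each `λᵢ` a unit or zero can only leap at one of `s₁, …, sᵣ`. -/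
theorem leaps_of_unit_combinations
    (r : ℕ) (δ : Fin r → Derivation k A A) (s : Fin r → ℕ)
    (hs2 : ∀ i, 2 ≤ s i) (hmono : StrictMono s)
    (hleap : ∀ i, LeapsAt k A (s i) (δ i))
    (d : Derivation k A A) (hd : d ≠ 0)
    (lam : Fin r → A) (hlam : ∀ i, IsUnit (lam i) ∨ lam i = 0)
    (hsum : d = ∑ i, lam i • δ i)
    (t : ℕ) (ht : 2 ≤ t) (hdt : LeapsAt k A t d) :
    ∃ i, t = s i := by
  classical
  set I : Finset (Fin r) := Finset.univ.filter fun i => lam i ≠ 0 with hI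
  have hunit : ∀ i ∈ I, IsUnit (lam i) := by
    intro i hi
    rw [hI, Finset.mem_filter] at hi
    rcases hlam i with h | h
    · exact h
    · exact absurd h hi.2
  have hdI : d = ∑ i ∈ I, lam i • δ i := by
    rw [hsum]
    refine (Finset.sum_subset (Finset.subset_univ I) ?_).symm
    intro i _ hi
    rw [hI, Finset.mem_filter] at hi
    push_neg at hi
    rw [hi (Finset.mem_univ i), zero_smul]
  have hIne : I.Nonempty := by
    by_contra hne
    rw [Finset.not_nonempty_iff_eq_empty] at hne
    rw [hne, Finset.sum_empty] at hdI
    exact hd hdI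
  set j := I.min' hIne with hj
  have hjI : j ∈ I := I.min'_mem hIne
  -- d is (s j - 1)-integrable
  have hd_int : IsIntegrable k A ((s j - 1 : ℕ) : ℕ∞) d := by
    rw [hdI]
    refine integrable_sum I _ ?_
    intro i hi
    have hji : j ≤ i := I.min'_le i hi
    have hsji : s j ≤ s i := hmono.monotone hji
    refine integrable_smul (hunit i hi) (integrable_mono ?_ (hleap i).1)
    exact_mod_cast Nat.sub_le_sub_right hsji 1
  -- d is not (s j)-integrable
  have hd_not : ¬ IsIntegrable k A ((s j : ℕ) : ℕ∞) d := by
    intro hint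
    have hrest : IsIntegrable k A ((s j : ℕ) : ℕ∞) (∑ i ∈ I.erase j, lam i • δ i) := by
      refine integrable_sum _ _ ?_
      intro i hi
      have hij : j < i := lt_of_le_of_ne (I.min'_le i (Finset.mem_of_mem_erase hi))
        (fun h => (Finset.mem_erase.mp hi).1 h.symm)
      have hsi : s j < s i := hmono hij
      refine integrable_smul (hunit i (Finset.mem_of_mem_erase hi))
        (integrable_mono ?_ (hleap i).1)
      have : s j ≤ s i - 1 := by omega
      exact_mod_cast this
    have heq : lam j • δ j = d + -(∑ i ∈ I.erase j, lam i • δ i) := by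
      have := Finset.add_sum_erase I (fun i => lam i • δ i) hjI
      rw [← hdI] at this
      rw [← this]
      abel
    have hint2 : IsIntegrable k A ((s j : ℕ) : ℕ∞) (lam j • δ j) := by
      rw [heq]
      exact integrable_add hint (integrable_neg hrest)
    obtain ⟨u, hu⟩ := hunit j hjI
    have : IsIntegrable k A ((s j : ℕ) : ℕ∞) (δ j) := by
      have h2 := integrable_smul (u := ((u⁻¹ : Aˣ) : A)) (Units.isUnit _) hint2
      rwa [smul_smul, ← hu, Units.inv_mul, one_smul] at h2
    exact (hleap j).2 this
  -- compare t with s j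
  rcases lt_trichotomy t (s j) with hlt | heq | hgt
  · exfalso
    refine hdt.2 (integrable_mono ?_ hd_int)
    have : t ≤ s j - 1 := by omega
    exact_mod_cast this
  · exact ⟨j, heq⟩
  · exfalso
    refine hd_not (integrable_mono ?_ hdt.1)
    have : s j ≤ t - 1 := by omega
    exact_mod_cast this

end Leaps
end

section
/- Let k be a commutative ring with unit, R = k[x_1,…,x_n], I = ⟨f_1,…,f_r⟩ an ideal generated by r elements, and A = R/I. Let J_r be the (n−r)-th Fitting ideal of Ω_{A/k} (generated by the images of the r-minors of the Jacobian matrix of f_1,…,f_r). If δ ∈ Der_k(A) satisfies δ(A) ⊆ J_r, then δ is ∞-integrable, i.e., δ extends to a Hasse–Schmidt derivation of A over k of infinite length. In particular, J_r · Der_k(A) ⊆ IDer_k(A). -/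
open scoped BigOperators

namespace CIIntegrability
open MvPolynomial PowerSeries
section CI
variable {k : Type*} [CommRing k] {n r : ℕ}

theorem coeff0_aeval (u : Fin n → PowerSeries (MvPolynomial (Fin n) k))
    (h0 : ∀ j, PowerSeries.coeff 0 (u j) = MvPolynomial.X j)
    (g : MvPolynomial (Fin n) k) :
    PowerSeries.coeff 0 (MvPolynomial.aeval u g) = g := by
  induction g using MvPolynomial.induction_on with
  | C a =>
      rw [MvPolynomial.aeval_C, PowerSeries.algebraMap_apply]
      simp [MvPolynomial.algebraMap_eq]
  | add p q hp hq => rw [map_add, map_add, hp, hq]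
  | mul_X p j hp => rw [map_mul, MvPolynomial.aeval_X, PowerSeries.coeff_mul]; simp [hp, h0]

theorem coeff_aeval_pert (m : ℕ) (hm : 1 ≤ m)
    (u u' : Fin n → PowerSeries (MvPolynomial (Fin n) k))
    (y : Fin n → MvPolynomial (Fin n) k)
    (h0 : ∀ j, PowerSeries.coeff 0 (u j) = X j)
    (hlow : ∀ j, ∀ s < m, PowerSeries.coeff s (u' j) = PowerSeries.coeff s (u j))
    (hmm : ∀ j, PowerSeries.coeff m (u' j) = PowerSeries.coeff m (u j) + y j)
    (g : MvPolynomial (Fin n) k) :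
    (∀ s < m, PowerSeries.coeff s (aeval u' g) = PowerSeries.coeff s (aeval u g)) ∧
    PowerSeries.coeff m (aeval u' g)
      = PowerSeries.coeff m (aeval u g) + ∑ j, pderiv j g * y j := by
  have h0' : ∀ j, PowerSeries.coeff 0 (u' j) = X j := fun j => by
    rw [hlow j 0 hm, h0]
  induction g using MvPolynomial.induction_on with
  | C a =>
      refine ⟨fun s _ => by rw [MvPolynomial.aeval_C, MvPolynomial.aeval_C], ?_⟩
      rw [MvPolynomial.aeval_C, MvPolynomial.aeval_C]
      simp
  | add p q hp hq =>
      refine ⟨fun s hs => by rw [map_add, map_add, map_add, map_add, hp.1 s hs, hq.1 s hs], ?_⟩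
      rw [map_add, map_add, map_add, map_add, hp.2, hq.2]
      simp only [map_add, add_mul, Finset.sum_add_distrib]
      ring
  | mul_X p j hp =>
      constructor
      · intro s hs
        simp only [map_mul, MvPolynomial.aeval_X, PowerSeries.coeff_mul]
        refine Finset.sum_congr rfl fun ab hab => ?_
        rw [Finset.HasAntidiagonal.mem_antidiagonal] at hab
        have h1 : ab.1 < m := lt_of_le_of_lt (le_trans (Nat.le_add_right _ _) hab.le) hs
        have h2 : ab.2 < m := lt_of_le_of_lt (le_trans (Nat.le_add_left _ _) hab.le) hs
        rw [hp.1 ab.1 h1, hlow j ab.2 h2]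
      · simp only [map_mul, MvPolynomial.aeval_X, PowerSeries.coeff_mul]
        have key : ∀ ab ∈ Finset.HasAntidiagonal.antidiagonal m,
            PowerSeries.coeff ab.1 (aeval u' p) * PowerSeries.coeff ab.2 (u' j)
              = PowerSeries.coeff ab.1 (aeval u p) * PowerSeries.coeff ab.2 (u j)
                + ((if ab.1 = m then (∑ j', pderiv j' p * y j') * X j else 0)
                + (if ab.2 = m then p * y j else 0)) := by
          intro ab hab
          rw [Finset.HasAntidiagonal.mem_antidiagonal] at hab
          rcases eq_or_lt_of_le (le_trans (Nat.le_add_right _ _) hab.le) with h1 | h1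
          · have h2 : ab.2 = 0 := by omega
            have h2m : ¬ (ab.2 = m) := by omega
            rw [h1, h2, if_pos rfl, if_neg (show ¬(0:ℕ) = m by omega), hp.2, h0, h0' j]
            ring
          · rcases eq_or_lt_of_le (le_trans (Nat.le_add_left _ _) hab.le) with h2 | h2
            · have h1' : ab.1 = 0 := by omega
              have h1m : ¬ (ab.1 = m) := by omega
              rw [h2, h1', if_neg (show ¬(0:ℕ) = m by omega), if_pos rfl, hmm j,
                coeff0_aeval u h0 p, coeff0_aeval u' h0' p]
              ring
            · rw [hp.1 ab.1 h1, hlow j ab.2 h2, if_neg (by omega), if_neg (by omega)]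
              ring
        rw [Finset.sum_congr rfl key, Finset.sum_add_distrib, Finset.sum_add_distrib]
        have e1 : (∑ ab ∈ Finset.HasAntidiagonal.antidiagonal m,
            (if ab.1 = m then (∑ j', pderiv j' p * y j') * X j else 0))
            = (∑ j', pderiv j' p * y j') * X j := by
          rw [Finset.sum_eq_single ((m, 0) : ℕ × ℕ)]
          · simp
          · intro b hb hbne
            rw [Finset.HasAntidiagonal.mem_antidiagonal] at hb
            have : ¬ (b.1 = m) := by
              intro h; apply hbne
              have : b.2 = 0 := by omega
              exact Prod.ext h this
            simp [this]
          · intro h; exact absurd (by simp : ((m, 0) : ℕ × ℕ) ∈ Finset.HasAntidiagonal.antidiagonal m) h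
        have e2 : (∑ ab ∈ Finset.HasAntidiagonal.antidiagonal m, (if ab.2 = m then p * y j else 0))
            = p * y j := by
          rw [Finset.sum_eq_single ((0, m) : ℕ × ℕ)]
          · simp
          · intro b hb hbne
            rw [Finset.HasAntidiagonal.mem_antidiagonal] at hb
            have : ¬ (b.2 = m) := by
              intro h; apply hbne
              have : b.1 = 0 := by omega
              exact Prod.ext this h
            simp [this]
          · intro h; exact absurd (by simp : ((0, m) : ℕ × ℕ) ∈ Finset.HasAntidiagonal.antidiagonal m) h
        rw [e1, e2]
        have e3 : ∀ j' : Fin n, pderiv j' (p * X j) * y j'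
            = pderiv j' p * X j * y j' + (if j' = j then p else 0) * y j' := by
          intro j'
          rw [pderiv_mul, pderiv_X, add_mul]
          congr 2
          by_cases h : j' = j <;> simp [Pi.single_apply, h, eq_comm]
        simp only [e3, Finset.sum_add_distrib]
        have e4 : (∑ j' : Fin n, (if j' = j then p else 0) * y j') = p * y j := by
          rw [Finset.sum_eq_single j] <;> simp +contextual
        rw [e4, Finset.sum_mul]
        have : ∀ j' : Fin n, pderiv j' p * y j' * X j = pderiv j' p * X j * y j' :=
          fun j' => by ring
        simp only [this]

theorem coeff_aeval_mem (m : ℕ) (hm : 1 ≤ m) (K : Ideal (MvPolynomial (Fin n) k))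
    (u : Fin n → PowerSeries (MvPolynomial (Fin n) k))
    (hpos : ∀ j, ∀ s, 1 ≤ s → PowerSeries.coeff s (u j) ∈ K)
    (htop : ∀ j, PowerSeries.coeff m (u j) = 0)
    (g : MvPolynomial (Fin n) k) :
    (∀ s, 1 ≤ s → PowerSeries.coeff s (aeval u g) ∈ K) ∧
    PowerSeries.coeff m (aeval u g) ∈ K * K := by
  induction g using MvPolynomial.induction_on with
  | C a =>
      constructor
      · intro s hs
        rw [MvPolynomial.aeval_C, PowerSeries.algebraMap_apply, PowerSeries.coeff_C,
          if_neg (by omega)]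
        exact Ideal.zero_mem K
      · rw [MvPolynomial.aeval_C, PowerSeries.algebraMap_apply, PowerSeries.coeff_C]
        rw [if_neg (by omega)]
        exact Ideal.zero_mem _
  | add p q hp hq =>
      exact ⟨fun s hs => by rw [map_add, map_add]; exact K.add_mem (hp.1 s hs) (hq.1 s hs),
        by rw [map_add, map_add]; exact Ideal.add_mem _ (hp.2) (hq.2)⟩
  | mul_X p j hp =>
      constructor
      · intro s hs
        simp only [map_mul, MvPolynomial.aeval_X, PowerSeries.coeff_mul]
        refine Ideal.sum_mem _ fun ab hab => ?_
        rw [Finset.HasAntidiagonal.mem_antidiagonal] at hab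
        rcases Nat.eq_zero_or_pos ab.2 with h2 | h2
        · have h1 : ab.1 = s := by omega
          exact Ideal.mul_mem_right _ _ (h1 ▸ hp.1 ab.1 (h1 ▸ hs))
        · exact Ideal.mul_mem_left _ _ (hpos j ab.2 h2)
      · simp only [map_mul, MvPolynomial.aeval_X, PowerSeries.coeff_mul]
        refine Ideal.sum_mem _ fun ab hab => ?_
        rw [Finset.HasAntidiagonal.mem_antidiagonal] at hab
        rcases Nat.eq_zero_or_pos ab.2 with h2 | h2
        · have h1 : ab.1 = m := by omega
          exact Ideal.mul_mem_right _ _ (h1 ▸ hp.2)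
        · rcases Nat.eq_zero_or_pos ab.1 with h1 | h1
          · have : ab.2 = m := by omega
            rw [this, htop j, mul_zero]
            exact Ideal.zero_mem _
          · exact Ideal.mul_mem_mul (hp.1 ab.1 h1) (hpos j ab.2 h2)

theorem deriv_mk_eq (I : Ideal (MvPolynomial (Fin n) k))
    (δ : Derivation k (MvPolynomial (Fin n) k ⧸ I) (MvPolynomial (Fin n) k ⧸ I))
    (a : MvPolynomial (Fin n) k) :
    δ (Ideal.Quotient.mk I a)
      = ∑ j, Ideal.Quotient.mk I (pderiv j a) * δ (Ideal.Quotient.mk I (X j)) := by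
  induction a using MvPolynomial.induction_on with
  | C c =>
      have : (Ideal.Quotient.mk I) (C c) = algebraMap k _ c := rfl
      rw [this, Derivation.map_algebraMap]
      simp
  | add p q hp hq =>
      rw [map_add, map_add, hp, hq, ← Finset.sum_add_distrib]
      congr 1; funext j; rw [map_add, map_add, add_mul]
  | mul_X p j hp =>
      have e1 : ∀ j' : Fin n, Ideal.Quotient.mk I (pderiv j' (p * X j))
          = Ideal.Quotient.mk I (pderiv j' p) * Ideal.Quotient.mk I (X j)
            + (if j' = j then Ideal.Quotient.mk I p else 0) := by
        intro j'
        rw [pderiv_mul, pderiv_X, map_add, map_mul]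
        congr 1
        by_cases h : j' = j <;> simp [Pi.single_apply, h, eq_comm]
      simp only [e1, add_mul, Finset.sum_add_distrib]
      rw [map_mul, Derivation.leibniz, hp, smul_eq_mul, smul_eq_mul]
      have e2 : ∑ x : Fin n, (if x = j then Ideal.Quotient.mk I p else 0) * δ (Ideal.Quotient.mk I (X x))
          = Ideal.Quotient.mk I p * δ (Ideal.Quotient.mk I (X j)) := by
        rw [Finset.sum_eq_single j]
        · simp
        · intro b _ hb; simp [hb]
        · intro h; exact absurd (Finset.mem_univ j) h
      rw [e2, add_comm, Finset.mul_sum]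
      congr 1
      congr 1; funext j'; ring


variable (f : Fin r → MvPolynomial (Fin n) k) (I Jm : Ideal (MvPolynomial (Fin n) k))

noncomputable def solvSet : Submodule (MvPolynomial (Fin n) k) (Fin r → MvPolynomial (Fin n) k) where
  carrier := {h | ∃ y : Fin n → MvPolynomial (Fin n) k,
    (∀ j, y j ∈ Jm ⊔ I) ∧ ∀ i, (∑ j, pderiv j (f i) * y j) + h i ∈ I}
  zero_mem' := ⟨0, fun j => Submodule.zero_mem _, fun i => by simp⟩
  add_mem' := by
    rintro a b ⟨y, hy, hsol⟩ ⟨y', hy', hsol'⟩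
    refine ⟨y + y', fun j => Submodule.add_mem _ (hy j) (hy' j), fun i => ?_⟩
    have := Ideal.add_mem _ (hsol i) (hsol' i)
    convert this using 1
    simp only [Pi.add_apply, mul_add, Finset.sum_add_distrib]
    ring
  smul_mem' := by
    rintro c a ⟨y, hy, hsol⟩
    refine ⟨c • y, fun j => Submodule.smul_mem _ _ (hy j), fun i => ?_⟩
    have := Ideal.mul_mem_left _ c (hsol i)
    convert this using 1
    simp only [Pi.smul_apply, smul_eq_mul, mul_add, Finset.mul_sum]
    ring_nf
    simp [mul_assoc, mul_left_comm]

theorem solve_exists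
    (hJm : Jm = Ideal.span { x | ∃ cols : Fin r → Fin n,
      x = Matrix.det (Matrix.of fun i j : Fin r => MvPolynomial.pderiv (cols j) (f i)) })
    (h : Fin r → MvPolynomial (Fin n) k) (hh : ∀ i, h i ∈ Jm * (Jm ⊔ I) ⊔ I) :
    ∃ y : Fin n → MvPolynomial (Fin n) k,
      (∀ j, y j ∈ Jm ⊔ I) ∧ ∀ i, (∑ j, pderiv j (f i) * y j) + h i ∈ I := by
  suffices hmem : h ∈ solvSet f I Jm by exact hmem
  have hsingle : ∀ i₀ : Fin r, ∀ g ∈ Jm * (Jm ⊔ I) ⊔ I, Pi.single i₀ g ∈ solvSet f I Jm := by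
    intro i₀ g hg
    rcases Submodule.mem_sup.mp hg with ⟨a, ha, b, hb, rfl⟩
    have hsb : (Pi.single i₀ (a + b) : Fin r → MvPolynomial (Fin n) k)
        = Pi.single i₀ a + Pi.single i₀ b := by
      funext i; simp only [Pi.single_apply, Pi.add_apply]; split <;> simp
    rw [hsb]
    refine Submodule.add_mem _ ?_ ?_
    · have key : ∀ a ∈ Jm, ∀ b' ∈ (Jm ⊔ I), Pi.single i₀ (a * b') ∈ solvSet f I Jm := by
        intro a ha
        rw [hJm] at ha
        induction ha using Submodule.span_induction with
        | mem x hx =>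
            intro b' hb'
            obtain ⟨cols, rfl⟩ := hx
            set Mc : Matrix (Fin r) (Fin r) (MvPolynomial (Fin n) k) :=
              Matrix.of fun i j : Fin r => MvPolynomial.pderiv (cols j) (f i) with hMc
            refine ⟨fun j => ∑ l, if cols l = j then -(Matrix.adjugate Mc l i₀ * b') else 0,
              fun j => ?_, fun i => ?_⟩
            · refine Submodule.sum_mem _ fun l _ => ?_
              split
              · exact Submodule.neg_mem _ (Ideal.mul_mem_left _ _ hb')
              · exact Submodule.zero_mem _
            · have swap : (∑ j, pderiv j (f i) *
                  (∑ l, if cols l = j then -(Matrix.adjugate Mc l i₀ * b') else 0))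
                  = ∑ l, Mc i l * -(Matrix.adjugate Mc l i₀ * b') := by
                simp only [Finset.mul_sum, mul_ite, mul_zero]
                rw [Finset.sum_comm]
                refine Finset.sum_congr rfl fun l _ => ?_
                rw [Finset.sum_ite_eq Finset.univ (cols l)
                  (fun j => pderiv j (f i) * -(Matrix.adjugate Mc l i₀ * b'))]
                simp [hMc]
              rw [swap]
              have hsum : (∑ l, Mc i l * -(Matrix.adjugate Mc l i₀ * b'))
                  = -(((Mc * Matrix.adjugate Mc) i i₀) * b') := by
                rw [Matrix.mul_apply, Finset.sum_mul, ← Finset.sum_neg_distrib]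
                congr 1; funext l; ring
              rw [hsum, Matrix.mul_adjugate, Matrix.smul_apply, Matrix.one_apply, smul_eq_mul,
                Pi.single_apply]
              by_cases hii : i = i₀
              · rw [if_pos hii, if_pos hii, mul_one]
                simp
              · rw [if_neg hii, if_neg hii, mul_zero, zero_mul, neg_zero, zero_add]
                exact I.zero_mem
        | zero =>
            intro b' hb'
            rw [zero_mul]
            have : (Pi.single i₀ (0 : MvPolynomial (Fin n) k) : Fin r → MvPolynomial (Fin n) k)
              = 0 := Pi.single_zero i₀
            rw [this]; exact Submodule.zero_mem _
        | add x y hxm hym ihx ihy =>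
            intro b' hb'
            have : (Pi.single i₀ ((x + y) * b') : Fin r → MvPolynomial (Fin n) k)
                = Pi.single i₀ (x * b') + Pi.single i₀ (y * b') := by
              funext i; simp only [Pi.single_apply, Pi.add_apply]; split <;> ring
            rw [this]; exact Submodule.add_mem _ (ihx b' hb') (ihy b' hb')
        | smul c x hxm ihx =>
            intro b' hb'
            have : (Pi.single i₀ ((c • x) * b') : Fin r → MvPolynomial (Fin n) k)
                = c • (Pi.single i₀ (x * b') : Fin r → MvPolynomial (Fin n) k) := by
              funext i
              simp only [Pi.single_apply, Pi.smul_apply, smul_eq_mul]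
              split <;> ring
            rw [this]; exact Submodule.smul_mem _ _ (ihx b' hb')
      refine Submodule.mul_induction_on ha (fun m hm b' hb' => key m hm b' hb') ?_
      intro x y hx hy
      have : (Pi.single i₀ (x + y) : Fin r → MvPolynomial (Fin n) k)
          = Pi.single i₀ x + Pi.single i₀ y := by
        funext i; simp only [Pi.single_apply, Pi.add_apply]; split <;> simp
      rw [this]; exact Submodule.add_mem _ hx hy
    · refine ⟨0, fun j => Submodule.zero_mem _, fun i => ?_⟩
      simp only [Pi.zero_apply, mul_zero, Finset.sum_const_zero, zero_add, Pi.single_apply]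
      split
      · exact hb
      · exact I.zero_mem
  have huniv : h = ∑ i₀, Pi.single i₀ (h i₀) := by
    funext i; rw [Finset.sum_apply]; simp [Pi.single_apply]
  rw [huniv]
  exact Submodule.sum_mem _ fun i₀ _ => hsingle i₀ (h i₀) (hh i₀)

noncomputable def solveV (h : Fin r → MvPolynomial (Fin n) k) : Fin n → MvPolynomial (Fin n) k :=
  letI := Classical.propDecidable
  if hh : ∃ y : Fin n → MvPolynomial (Fin n) k,
      (∀ j, y j ∈ Jm ⊔ I) ∧ ∀ i, (∑ j, pderiv j (f i) * y j) + h i ∈ I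
  then hh.choose else 0

theorem solveV_spec (h : Fin r → MvPolynomial (Fin n) k)
    (hh : ∃ y : Fin n → MvPolynomial (Fin n) k,
      (∀ j, y j ∈ Jm ⊔ I) ∧ ∀ i, (∑ j, pderiv j (f i) * y j) + h i ∈ I) :
    (∀ j, solveV f I Jm h j ∈ Jm ⊔ I) ∧
      ∀ i, (∑ j, pderiv j (f i) * solveV f I Jm h j) + h i ∈ I := by
  rw [solveV]
  simp only [dif_pos hh]
  exact hh.choose_spec

noncomputable def seqc (e : Fin n → MvPolynomial (Fin n) k) :
    ℕ → Fin n → MvPolynomial (Fin n) k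
  | 0 => fun j => X j
  | 1 => e
  | (m+2) => solveV f I Jm (fun i => PowerSeries.coeff (m+2)
      (aeval (fun j => PowerSeries.mk fun s =>
        if hs : s < m+2 then seqc e s j else 0) (f i)))


theorem aeval_CX (g : MvPolynomial (Fin n) k) :
    aeval (fun j : Fin n => PowerSeries.C (R := MvPolynomial (Fin n) k) (X j)) g
      = PowerSeries.C g := by
  induction g using MvPolynomial.induction_on with
  | C a =>
      rw [MvPolynomial.aeval_C, PowerSeries.algebraMap_apply, MvPolynomial.algebraMap_eq]
  | add p q hp hq => rw [map_add, hp, hq, map_add]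
  | mul_X p j hp => rw [map_mul, MvPolynomial.aeval_X, hp, map_mul]

theorem seqc_inv
    (hI : I = Ideal.span (Set.range f))
    (hJm : Jm = Ideal.span { x | ∃ cols : Fin r → Fin n,
      x = Matrix.det (Matrix.of fun i j : Fin r => MvPolynomial.pderiv (cols j) (f i)) })
    (e : Fin n → MvPolynomial (Fin n) k)
    (he : ∀ j, e j ∈ Jm ⊔ I)
    (he2 : ∀ i, (∑ j, pderiv j (f i) * e j) ∈ I) (m : ℕ) :
    (∀ j, 1 ≤ m → seqc f I Jm e m j ∈ Jm ⊔ I) ∧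
    (∀ i, PowerSeries.coeff m
      (aeval (fun j => PowerSeries.mk fun s => seqc f I Jm e s j) (f i)) ∈ I) := by
  induction m using Nat.strong_induction_on with
  | _ m IH =>
  have hu0 : ∀ j, PowerSeries.coeff 0
      ((fun j => PowerSeries.mk fun s => seqc f I Jm e s j) j) = X j := fun j => by
    rw [PowerSeries.coeff_mk]; simp [seqc]
  obtain rfl | rfl | ⟨m', rfl⟩ : m = 0 ∨ m = 1 ∨ ∃ m', m = m' + 2 := by
    rcases m with _ | _ | m'
    · exact Or.inl rfl
    · exact Or.inr (Or.inl rfl)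
    · exact Or.inr (Or.inr ⟨m', rfl⟩)
  · refine ⟨fun j h => by omega, fun i => ?_⟩
    rw [coeff0_aeval _ hu0]
    rw [hI]
    exact Ideal.subset_span ⟨i, rfl⟩
  · constructor
    · intro j _
      have h1 : seqc f I Jm e 1 j = e j := by simp [seqc]
      rw [h1]; exact he j
    · intro i
      have hpert := coeff_aeval_pert 1 le_rfl
        (fun j : Fin n => PowerSeries.C (R := MvPolynomial (Fin n) k) (X j))
        (fun j => PowerSeries.mk fun s => seqc f I Jm e s j) e
        (fun j => PowerSeries.coeff_zero_C _)
        (fun j s hs => by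
          interval_cases s
          rw [hu0, PowerSeries.coeff_zero_C])
        (fun j => by
          rw [PowerSeries.coeff_mk, PowerSeries.coeff_C, if_neg (by omega), zero_add]
          simp [seqc])
        (f i)
      rw [hpert.2, aeval_CX, PowerSeries.coeff_C, if_neg (by omega), zero_add]
      exact he2 i
  · have hseq : seqc f I Jm e (m' + 2) = solveV f I Jm
        (fun i => PowerSeries.coeff (m' + 2)
          (aeval (fun j => PowerSeries.mk fun s =>
            if hs : s < m' + 2 then seqc f I Jm e s j else 0) (f i))) := by
      rw [seqc]
    have hmem : ∀ i, (PowerSeries.coeff (m' + 2)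
        (aeval (fun j => PowerSeries.mk fun s =>
          if hs : s < m' + 2 then seqc f I Jm e s j else 0) (f i)))
        ∈ (Jm ⊔ I) * (Jm ⊔ I) := by
      intro i
      refine (coeff_aeval_mem (m' + 2) (by omega) (Jm ⊔ I) _ ?_ ?_ (f i)).2
      · intro j s hs
        rw [PowerSeries.coeff_mk]
        split
        · next hlt =>
            rcases Nat.lt_or_ge s 1 with h | h
            · omega
            · exact (IH s (by omega)).1 j hs
        · exact Submodule.zero_mem _
      · intro j
        rw [PowerSeries.coeff_mk, dif_neg (by omega)]
    have hmem' : ∀ i, (PowerSeries.coeff (m' + 2)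
        (aeval (fun j => PowerSeries.mk fun s =>
          if hs : s < m' + 2 then seqc f I Jm e s j else 0) (f i)))
        ∈ Jm * (Jm ⊔ I) ⊔ I := by
      intro i
      have hle : (Jm ⊔ I) * (Jm ⊔ I) ≤ Jm * (Jm ⊔ I) ⊔ I := by
        rw [Ideal.sup_mul]
        exact sup_le_sup le_rfl Ideal.mul_le_left
      exact hle (hmem i)
    have hex := solve_exists f I Jm hJm _ hmem'
    have hspec := solveV_spec f I Jm _ hex
    constructor
    · intro j _
      rw [hseq]
      exact hspec.1 j
    · intro i
      have hpert := coeff_aeval_pert (m' + 2) (by omega)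
        (fun j => PowerSeries.mk fun s =>
          if hs : s < m' + 2 then seqc f I Jm e s j else 0)
        (fun j => PowerSeries.mk fun s => seqc f I Jm e s j)
        (fun j => seqc f I Jm e (m' + 2) j)
        (fun j => by rw [PowerSeries.coeff_mk, dif_pos (by omega)]; simp [seqc])
        (fun j s hs => by rw [PowerSeries.coeff_mk, PowerSeries.coeff_mk, dif_pos hs])
        (fun j => by rw [PowerSeries.coeff_mk, PowerSeries.coeff_mk, dif_neg (by omega), zero_add])
        (f i)
      rw [hpert.2, add_comm]
      have := hspec.2 i
      rw [← hseq] at this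
      exact this

theorem chainrule_coeff_one
    (u : Fin n → PowerSeries (MvPolynomial (Fin n) k))
    (δ : Derivation k (MvPolynomial (Fin n) k ⧸ I) (MvPolynomial (Fin n) k ⧸ I))
    (h0 : ∀ j, PowerSeries.coeff 0 (u j) = X j)
    (h1 : ∀ j, Ideal.Quotient.mk I (PowerSeries.coeff 1 (u j))
      = δ (Ideal.Quotient.mk I (X j)))
    (a : MvPolynomial (Fin n) k) :
    Ideal.Quotient.mk I (PowerSeries.coeff 1 (aeval u a)) = δ (Ideal.Quotient.mk I a) := by
  induction a using MvPolynomial.induction_on with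
  | C c =>
      rw [MvPolynomial.aeval_C, PowerSeries.algebraMap_apply, PowerSeries.coeff_C,
        if_neg (by omega), map_zero]
      have : (Ideal.Quotient.mk I) (C c) = algebraMap k _ c := rfl
      rw [this, Derivation.map_algebraMap]
  | add p q hp hq =>
      rw [map_add, map_add, map_add, map_add, hp, hq]
      exact (map_add δ _ _).symm
  | mul_X p j hp =>
      rw [map_mul, MvPolynomial.aeval_X, PowerSeries.coeff_mul,
        Finset.Nat.sum_antidiagonal_eq_sum_range_succ_mk, Finset.sum_range_succ,
        Finset.sum_range_succ, Finset.sum_range_zero, zero_add]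
      simp only [Nat.sub_self, Nat.sub_zero]
      rw [map_add, map_mul, map_mul, coeff0_aeval u h0 p, h1 j, h0 j, hp, map_mul,
        Derivation.leibniz, smul_eq_mul, smul_eq_mul]
      ring

theorem key
    (hI : I = Ideal.span (Set.range f))
    (J : Ideal (MvPolynomial (Fin n) k ⧸ I))
    (hJ : J = Ideal.span { x | ∃ cols : Fin r → Fin n,
      x = Ideal.Quotient.mk I
        (Matrix.det (Matrix.of fun i j : Fin r => MvPolynomial.pderiv (cols j) (f i))) })
    (δ : Derivation k (MvPolynomial (Fin n) k ⧸ I) (MvPolynomial (Fin n) k ⧸ I))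
    (hδ : ∀ a, δ a ∈ J) :
    IsIntegrable k (MvPolynomial (Fin n) k ⧸ I) ⊤ δ := by
  classical
  set Jm : Ideal (MvPolynomial (Fin n) k) := Ideal.span { x | ∃ cols : Fin r → Fin n,
      x = Matrix.det (Matrix.of fun i j : Fin r => MvPolynomial.pderiv (cols j) (f i)) }
    with hJm
  have hmap : J = Jm.map (Ideal.Quotient.mk I) := by
    rw [hJ, hJm, Ideal.map_span]
    congr 1
    ext x
    constructor
    · rintro ⟨cols, rfl⟩
      exact ⟨_, ⟨cols, rfl⟩, rfl⟩
    · rintro ⟨y, ⟨cols, rfl⟩, rfl⟩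
      exact ⟨cols, rfl⟩
  have hcomap : ∀ a : MvPolynomial (Fin n) k,
      Ideal.Quotient.mk I a ∈ J ↔ a ∈ Jm ⊔ I := by
    intro a
    have hcm : (Jm.map (Ideal.Quotient.mk I)).comap (Ideal.Quotient.mk I) = Jm ⊔ I := by
      rw [Ideal.comap_map_of_surjective _ Ideal.Quotient.mk_surjective,
        ← RingHom.ker_eq_comap_bot, Ideal.mk_ker]
    rw [hmap, ← hcm]
    exact Iff.rfl
  have hechoice : ∀ j : Fin n, ∃ a, Ideal.Quotient.mk I a
      = δ (Ideal.Quotient.mk I (X j)) := fun j => Ideal.Quotient.mk_surjective _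
  choose e he using hechoice
  have he1 : ∀ j, e j ∈ Jm ⊔ I := fun j =>
    (hcomap (e j)).1 (by rw [he j]; exact hδ _)
  have he2 : ∀ i, (∑ j, pderiv j (f i) * e j) ∈ I := by
    intro i
    rw [← Ideal.Quotient.eq_zero_iff_mem, map_sum]
    have hterm : ∀ j : Fin n, Ideal.Quotient.mk I (pderiv j (f i) * e j)
        = Ideal.Quotient.mk I (pderiv j (f i)) * δ (Ideal.Quotient.mk I (X j)) := fun j => by
      rw [map_mul, he j]
    rw [Finset.sum_congr rfl fun j _ => hterm j, ← deriv_mk_eq I δ (f i)]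
    have hf0 : Ideal.Quotient.mk I (f i) = 0 :=
      Ideal.Quotient.eq_zero_iff_mem.2 (hI ▸ Ideal.subset_span ⟨i, rfl⟩)
    rw [hf0, map_zero]
  set u : Fin n → PowerSeries (MvPolynomial (Fin n) k) :=
    fun j => PowerSeries.mk fun s => seqc f I Jm e s j with hu
  have inv := seqc_inv f I Jm hI hJm e he1 he2
  have hu0 : ∀ j, PowerSeries.coeff 0 (u j) = X j := fun j => by
    rw [hu, PowerSeries.coeff_mk]; simp [seqc]
  have hu1 : ∀ j, PowerSeries.coeff 1 (u j) = e j := fun j => by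
    rw [hu, PowerSeries.coeff_mk]; simp [seqc]
  have hwd : ∀ α : ℕ, ∀ a ∈ I, PowerSeries.coeff α (aeval u a) ∈ I := by
    intro α a ha
    rw [hI, Ideal.mem_span_range_iff_exists_fun] at ha
    obtain ⟨g, hg⟩ := ha
    rw [← hg, map_sum, map_sum]
    refine Ideal.sum_mem _ fun i _ => ?_
    rw [map_mul, PowerSeries.coeff_mul]
    refine Ideal.sum_mem _ fun ab _ => ?_
    exact Ideal.mul_mem_left _ _ ((inv ab.2).2 i)
  have hker : ∀ α : ℕ, ∀ a ∈ I,
      Ideal.Quotient.mk I (PowerSeries.coeff α (aeval u a)) = 0 := fun α a ha =>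
    Ideal.Quotient.eq_zero_iff_mem.2 (hwd α a ha)
  let L : ℕ → (MvPolynomial (Fin n) k →ₗ[k] (MvPolynomial (Fin n) k ⧸ I)) := fun α =>
    { toFun := fun a => Ideal.Quotient.mk I (PowerSeries.coeff α (aeval u a))
      map_add' := fun a b => by rw [map_add, map_add, map_add]
      map_smul' := fun c a => by
        rw [RingHom.id_apply, MvPolynomial.smul_eq_C_mul, map_mul, MvPolynomial.aeval_C,
          PowerSeries.algebraMap_apply, PowerSeries.coeff_C_mul, map_mul,
          Ideal.Quotient.mk_algebraMap, ← Algebra.smul_def] }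
  let Dq : ℕ → ((MvPolynomial (Fin n) k ⧸ I) →ₗ[k] (MvPolynomial (Fin n) k ⧸ I)) := fun α =>
    (Submodule.liftQ ((I : Submodule (MvPolynomial (Fin n) k) (MvPolynomial (Fin n) k)).restrictScalars k)
        (L α) (fun a ha => hker α a ha)).comp
      (Submodule.Quotient.restrictScalarsEquiv k
        (I : Submodule (MvPolynomial (Fin n) k) (MvPolynomial (Fin n) k))).symm.toLinearMap
  have hDq : ∀ α a, Dq α (Ideal.Quotient.mk I a)
      = Ideal.Quotient.mk I (PowerSeries.coeff α (aeval u a)) := by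
    intro α a
    show (Submodule.liftQ
        ((I : Submodule (MvPolynomial (Fin n) k) (MvPolynomial (Fin n) k)).restrictScalars k)
        (L α) (fun a ha => hker α a ha))
      ((Submodule.Quotient.restrictScalarsEquiv k
        (I : Submodule (MvPolynomial (Fin n) k) (MvPolynomial (Fin n) k))).symm
        (Submodule.Quotient.mk a)) = _
    rw [Submodule.Quotient.restrictScalarsEquiv_symm_mk]
    rfl
  refine ⟨Dq, ⟨?_, ?_⟩, ?_⟩
  · apply LinearMap.ext
    intro x
    obtain ⟨a, rfl⟩ := Ideal.Quotient.mk_surjective x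
    rw [hDq, coeff0_aeval u hu0, LinearMap.id_apply]
  · intro α _ x y
    obtain ⟨a, rfl⟩ := Ideal.Quotient.mk_surjective x
    obtain ⟨b, rfl⟩ := Ideal.Quotient.mk_surjective y
    rw [← map_mul, hDq, map_mul, PowerSeries.coeff_mul, map_sum]
    refine Finset.sum_congr rfl fun ab _ => ?_
    rw [map_mul, hDq, hDq]
  · apply LinearMap.ext
    intro x
    obtain ⟨a, rfl⟩ := Ideal.Quotient.mk_surjective x
    have hcr := chainrule_coeff_one I u δ hu0 (fun j => by rw [hu1 j, he j]) a
    rw [hDq]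
    exact hcr
end CI
end CIIntegrability

/-- **Integrability for complete intersections (Theorem 5.1).**  Let `k` be a commutative
ring, `R = k[x₁,…,xₙ]`, `I = ⟨f₁,…,f_r⟩` and `A = R/I`.  Let `J_r` be the
`(n-r)`-Fitting ideal of `Ω_{A/k}`, i.e. the ideal of `A` generated by the images of the
`r × r` minors of the Jacobian matrix of `(f₁,…,f_r)`.  If `δ ∈ Der_k(A)` satisfies
`δ(A) ⊆ J_r`, then `δ` is `∞`-integrable.  In particular `J_r · Der_k(A) ⊆ IDer_k(A)`. -/
theorem complete_intersection_integrability
    (k : Type*) [CommRing k] (n r : ℕ)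
    (f : Fin r → MvPolynomial (Fin n) k)
    (I : Ideal (MvPolynomial (Fin n) k)) (hI : I = Ideal.span (Set.range f))
    (J : Ideal (MvPolynomial (Fin n) k ⧸ I))
    (hJ : J = Ideal.span { x | ∃ cols : Fin r → Fin n,
      x = Ideal.Quotient.mk I
        (Matrix.det (Matrix.of fun i j : Fin r => MvPolynomial.pderiv (cols j) (f i))) })
    (δ : Derivation k (MvPolynomial (Fin n) k ⧸ I) (MvPolynomial (Fin n) k ⧸ I))
    (hδ : ∀ a, δ a ∈ J) :
    IsIntegrable k (MvPolynomial (Fin n) k ⧸ I) ⊤ δ ∧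
    (∀ Δ ∈ J, ∀ d : Derivation k (MvPolynomial (Fin n) k ⧸ I) (MvPolynomial (Fin n) k ⧸ I),
      IsIntegrable k (MvPolynomial (Fin n) k ⧸ I) ⊤ (Δ • d)) := by
  constructor
  · exact CIIntegrability.key f I hI J hJ δ hδ
  · intro Δ hΔ d
    set_option synthInstance.maxHeartbeats 1000000 in
    refine CIIntegrability.key f I hI J hJ (Δ • d) ?_
    intro a
    rw [Derivation.smul_apply, smul_eq_mul]
    exact Ideal.mul_mem_right _ _ hΔ
end

section
/- Let k be a regular ring, R = k[x_1,…,x_n], I ⊂ R a radical ideal, and A = R/I. Let P ⊆ Min(I) be a non-empty set of minimal primes such that the (n−ht(Q))-Fitting ideal of Ω_{A/k} is the unit ideal in A_Q for every Q ∈ P. Let r = max{ht(Q) : Q ∈ P}. Then there exists a finite set of generators S = {f_1,…,f_s} of I containing a subset F of r elements such that the Jacobian matrix of F has rank equal to ht(Q) in A_Q for every Q ∈ P. -/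
set_option maxHeartbeats 4000000
set_option synthInstance.maxHeartbeats 400000

open Matrix MvPolynomial

section Aux

/-- rows independent implies some maximal minor is nonzero -/
lemma exists_cols_det_ne_zero {K : Type*} [Field K] {m n : ℕ}
    (M : Matrix (Fin m) (Fin n) K) (h : LinearIndependent K (fun i => M i)) :
    ∃ cols : Fin m → Fin n, (M.submatrix id cols).det ≠ 0 := by
  classical
  have hrank : M.rank = m := by simpa using h.rank_matrix
  have hspan : Submodule.span K (Set.range Mᵀ) = ⊤ := by
    rw [show Set.range Mᵀ = Set.range M.col from rfl, ← Matrix.range_mulVecLin]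
    apply Submodule.eq_top_of_finrank_eq
    rw [show Module.finrank K ↥(LinearMap.range M.mulVecLin) = M.rank from rfl, hrank]
    simp [Module.finrank_pi]
  obtain ⟨b, hbsub, hbspan, hbind⟩ := exists_linearIndependent K (Set.range Mᵀ)
  rw [hspan] at hbspan
  haveI : Fintype b := (hbind.setFinite).fintype
  have hbbasis : Module.Basis b K (Fin m → K) :=
    Module.Basis.mk hbind (by rw [Subtype.range_coe_subtype, Set.setOf_mem_eq, hbspan])
  have hcard : Fintype.card b = m := by
    have := Module.finrank_eq_card_basis hbbasis
    rw [Module.finrank_fin_fun] at this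
    omega
  let e : Fin m ≃ b := (Fintype.equivFinOfCardEq hcard).symm
  have hsel : ∀ x : b, ∃ j : Fin n, Mᵀ j = (x : Fin m → K) := fun x => hbsub x.2
  choose sel hsel' using hsel
  refine ⟨fun i => sel (e i), ?_⟩
  have hind2 : LinearIndependent K (fun i : Fin m => (M.submatrix id (fun i => sel (e i)))ᵀ i) := by
    have : (fun i : Fin m => (M.submatrix id (fun i => sel (e i)))ᵀ i)
        = fun i : Fin m => ((e i : Fin m → K)) := by
      funext i; rw [← hsel' (e i)]; rfl
    rw [this]
    exact hbind.comp e e.injective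
  have := linearIndependent_cols_iff_isUnit.mp hind2
  rw [Matrix.isUnit_iff_isUnit_det] at this
  exact this.ne_zero

lemma rows_indep_of_det_ne_zero {K : Type*} [Field K] {m n : ℕ}
    (M : Matrix (Fin m) (Fin n) K) (cols : Fin m → Fin n)
    (h : (M.submatrix id cols).det ≠ 0) :
    LinearIndependent K (fun i => M i) := by
  have hu : IsUnit (M.submatrix id cols) := by
    rw [Matrix.isUnit_iff_isUnit_det, isUnit_iff_ne_zero]; exact h
  have h2 := linearIndependent_rows_iff_isUnit.mpr hu
  exact LinearIndependent.of_comp (LinearMap.funLeft K K cols) h2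

lemma span_pigeonhole {K : Type*} [Field K] {n h j : ℕ} (u : Fin h → (Fin n → K))
    (hu : LinearIndependent K u) (v : Fin j → (Fin n → K)) (hjh : j < h)
    (hall : ∀ a, u a ∈ Submodule.span K (Set.range v)) : False := by
  classical
  set W := Submodule.span K (Set.range v) with hW
  have hWr : Module.finrank K W ≤ j := by
    have := finrank_span_le_card (R := K) (Set.range v)
    refine le_trans this ?_
    rw [Set.toFinset_card]
    exact le_trans (Fintype.card_range_le v) (by simp)
  have hu' : LinearIndependent K (fun a => (⟨u a, hall a⟩ : W)) := by
    apply LinearIndependent.of_comp W.subtype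
    exact hu
  have := hu'.fintype_card_le_finrank
  simp at this
  omega

lemma det_mem_of_row {S : Type*} [CommRing S] (Q : Ideal S) {m : ℕ}
    (M : Matrix (Fin m) (Fin m) S) (a : Fin m) (h : ∀ b, M a b ∈ Q) : M.det ∈ Q := by
  rw [Matrix.det_apply]
  apply Ideal.sum_mem
  intro σ _
  rw [Units.smul_def, zsmul_eq_mul]
  apply Ideal.mul_mem_left
  rw [Finset.prod_eq_mul_prod_sdiff_singleton_of_mem (Finset.mem_univ (σ⁻¹ a))]
  apply Ideal.mul_mem_right
  simpa using h (σ⁻¹ a)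

lemma pderiv_mem_of_mem_sq {k : Type*} [CommRing k] {n : ℕ}
    (Q : Ideal (MvPolynomial (Fin n) k)) {F : MvPolynomial (Fin n) k}
    (hF : F ∈ Q * Q) (j : Fin n) : MvPolynomial.pderiv j F ∈ Q := by
  refine Submodule.mul_induction_on hF ?_ ?_
  · intro a ha b hb
    rw [MvPolynomial.pderiv_mul]
    exact Q.add_mem (Q.mul_mem_left _ hb) (Q.mul_mem_right _ ha)
  · intro x y hx hy
    rw [map_add]; exact Q.add_mem hx hy

variable {k : Type*} [CommRing k] {n : ℕ}

/-- residue map to the fraction field of `R/Q`. -/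
noncomputable def resF (Q : Ideal (MvPolynomial (Fin n) k)) :
    MvPolynomial (Fin n) k →+* FractionRing (MvPolynomial (Fin n) k ⧸ Q) :=
  (algebraMap (MvPolynomial (Fin n) k ⧸ Q) _).comp (Ideal.Quotient.mk Q)

lemma resF_eq_zero_iff (Q : Ideal (MvPolynomial (Fin n) k)) (hQ : Q.IsPrime)
    (x : MvPolynomial (Fin n) k) : resF Q x = 0 ↔ x ∈ Q := by
  haveI := hQ
  rw [resF, RingHom.comp_apply, map_eq_zero_iff _ (IsFractionRing.injective _ _),
    Ideal.Quotient.eq_zero_iff_mem]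

/-- the gradient vector of a polynomial, over the residue field at `Q`. -/
noncomputable def grad (Q : Ideal (MvPolynomial (Fin n) k)) (F : MvPolynomial (Fin n) k) :
    Fin n → FractionRing (MvPolynomial (Fin n) k ⧸ Q) :=
  fun j => resF Q (pderiv j F)

lemma grad_add (Q : Ideal (MvPolynomial (Fin n) k)) (x y : MvPolynomial (Fin n) k) :
    grad Q (x + y) = grad Q x + grad Q y := by
  funext j; simp [grad]

lemma grad_mul_mem (Q : Ideal (MvPolynomial (Fin n) k)) (hQ : Q.IsPrime)
    (c x : MvPolynomial (Fin n) k) (hx : x ∈ Q) :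
    grad Q (c * x) = resF Q c • grad Q x := by
  funext j
  simp only [grad, pderiv_mul, map_add, _root_.map_mul, Pi.smul_apply, smul_eq_mul]
  rw [(resF_eq_zero_iff Q hQ x).mpr hx]
  ring

lemma minor_det_eq (Q : Ideal (MvPolynomial (Fin n) k)) {m : ℕ}
    (F : Fin m → MvPolynomial (Fin n) k) (cols : Fin m → Fin n) :
    resF Q (Matrix.det (Matrix.of fun a b : Fin m => pderiv (cols b) (F a)))
      = (((Matrix.of fun (a : Fin m) (j : Fin n) => grad Q (F a) j)).submatrix id cols).det := by
  rw [RingHom.map_det (resF Q) (Matrix.of fun a b : Fin m => pderiv (cols b) (F a))]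
  rfl

lemma minor_iff_indep (Q : Ideal (MvPolynomial (Fin n) k)) (hQ : Q.IsPrime) {m : ℕ}
    (F : Fin m → MvPolynomial (Fin n) k) :
    (∃ cols : Fin m → Fin n,
        Matrix.det (Matrix.of fun a b : Fin m => pderiv (cols b) (F a)) ∉ Q)
      ↔ LinearIndependent (FractionRing (MvPolynomial (Fin n) k ⧸ Q))
          (fun a : Fin m => grad Q (F a)) := by
  haveI := hQ
  constructor
  · rintro ⟨cols, hc⟩
    apply rows_indep_of_det_ne_zero (M := Matrix.of fun (a : Fin m) (j : Fin n) => grad Q (F a) j)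
      cols
    rw [← minor_det_eq, Ne, resF_eq_zero_iff Q hQ]
    exact hc
  · intro hind
    obtain ⟨cols, hcols⟩ := exists_cols_det_ne_zero
      (M := Matrix.of fun (a : Fin m) (j : Fin n) => grad Q (F a) j) hind
    refine ⟨cols, fun hmem => hcols ?_⟩
    rw [← minor_det_eq, resF_eq_zero_iff Q hQ]
    exact hmem

end Aux
/-- A regular local ring: Noetherian local, whose maximal ideal is generated by
`dim R` elements. -/
def IsRegLocalRing (R : Type*) [CommRing R] : Prop :=
  IsNoetherianRing R ∧
    ∃ (h : IsLocalRing R) (s : Finset R),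
      Ideal.span (s : Set R) = @IsLocalRing.maximalIdeal R _ h ∧
      (s.card : WithBot (WithTop ℕ)) = ringKrullDim R

/-- A regular (commutative) ring: Noetherian, and all localizations at primes are regular local. -/
def IsRegRing (R : Type*) [CommRing R] : Prop :=
  IsNoetherianRing R ∧ ∀ (P : Ideal R) (_ : P.IsPrime), IsRegLocalRing (Localization.AtPrime P)

/-- The height of a prime ideal `P`, as the height of the corresponding point
of the prime spectrum. -/
noncomputable def primeHt {R : Type*} [CommRing R] (P : Ideal R) (hP : P.IsPrime) : ℕ∞ :=
  Order.height (⟨P, hP⟩ : PrimeSpectrum R)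

/-- **Existence of generic generators (Proposition 4.6).**  Let `k` be a regular ring,
`R = k[x₁,…,xₙ]`, `I ⊂ R` a radical ideal (presented by generators `g₁,…,g_t`), and
`PP ⊆ Min(I)` a non-empty set of minimal primes such that for each `Q ∈ PP` the
`(n - ht Q)`-Fitting ideal of `Ω_{A/k}` is the unit ideal in `A_Q` (equivalently, some
`ht Q`-minor of the Jacobian of the generators lies outside `Q`).  Let
`r = max{ht Q : Q ∈ PP}`.  Then there is a finite system of generators `f₁,…,f_s` of `I`
containing a subset `F` of `r` elements whose Jacobian matrix has rank `ht Q` at `A_Q`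
for every `Q ∈ PP` (i.e. some `ht Q`-minor of `J(F)` is outside `Q` while all
`(ht Q + 1)`-minors lie in `Q`). -/
theorem generic_generators
    (k : Type*) [CommRing k] (hkreg : IsRegRing k) (n : ℕ)
    (I : Ideal (MvPolynomial (Fin n) k)) (hrad : I.IsRadical)
    (PP : Set (Ideal (MvPolynomial (Fin n) k))) (hPPsub : PP ⊆ I.minimalPrimes)
    (hne : PP.Nonempty)
    (t : ℕ) (g : Fin t → MvPolynomial (Fin n) k) (hg : I = Ideal.span (Set.range g))
    -- the condition `J^ht_PP`:
    (hJht : ∀ Q ∈ PP, ∀ (hQ : Q.IsPrime) (h : ℕ), primeHt Q hQ = (h : ℕ∞) →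
      ∃ (rows : Fin h → Fin t) (cols : Fin h → Fin n),
        Matrix.det (Matrix.of fun i j : Fin h =>
          MvPolynomial.pderiv (cols j) (g (rows i))) ∉ Q)
    (r : ℕ)
    (hub : ∀ Q ∈ PP, ∀ (hQ : Q.IsPrime), primeHt Q hQ ≤ (r : ℕ∞))
    (hmax : ∃ Q ∈ PP, ∃ (hQ : Q.IsPrime), primeHt Q hQ = (r : ℕ∞)) :
    ∃ (s : ℕ) (f : Fin s → MvPolynomial (Fin n) k),
      I = Ideal.span (Set.range f) ∧
      ∃ ι : Fin r → Fin s, Function.Injective ι ∧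
        ∀ Q ∈ PP, ∀ (hQ : Q.IsPrime) (h : ℕ), primeHt Q hQ = (h : ℕ∞) →
          (∃ (rows : Fin h → Fin r) (cols : Fin h → Fin n),
            Matrix.det (Matrix.of fun i j : Fin h =>
              MvPolynomial.pderiv (cols j) (f (ι (rows i)))) ∉ Q) ∧
          (∀ (rows : Fin (h + 1) → Fin r) (cols : Fin (h + 1) → Fin n),
            Matrix.det (Matrix.of fun i j : Fin (h + 1) =>
              MvPolynomial.pderiv (cols j) (f (ι (rows i)))) ∈ Q) := by

  classical
  clear hrad hne hmax
  haveI hNoeth : IsNoetherianRing (MvPolynomial (Fin n) k) := by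
    haveI := hkreg.1; infer_instance
  -- PP is finite
  have PPfin : PP.Finite := by
    refine Set.Finite.subset ?_ hPPsub
    rw [Ideal.minimalPrimes_eq_comap]
    exact (minimalPrimes.finite_of_isNoetherianRing _).image _
  set PPf : Finset (Ideal (MvPolynomial (Fin n) k)) := PPfin.toFinset with hPPf
  have hPPfmem : ∀ Q, Q ∈ PPf ↔ Q ∈ PP := fun Q => PPfin.mem_toFinset
  -- primality and containment
  have hprime : ∀ Q ∈ PP, Q.IsPrime := fun Q hQ => (hPPsub hQ).1.1
  have hIle : ∀ Q ∈ PP, I ≤ Q := fun Q hQ => (hPPsub hQ).1.2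
  -- natural-number heights
  set hn : Ideal (MvPolynomial (Fin n) k) → ℕ :=
    fun Q => if hq : Q.IsPrime then (primeHt Q hq).toNat else 0 with hhn
  have ht1 : ∀ Q (hQ : Q ∈ PP), ((hn Q : ℕ∞)) = primeHt Q (hprime Q hQ) := by
    intro Q hQ
    have hp := hprime Q hQ
    have hne : primeHt Q hp ≠ ⊤ := by
      intro htop
      have := hub Q hQ hp
      rw [htop, top_le_iff] at this
      exact (WithTop.natCast_ne_top r) this
    simp only [hhn, dif_pos hp]
    exact ENat.coe_toNat hne
  have hnler : ∀ Q ∈ PP, hn Q ≤ r := by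
    intro Q hQ
    have := hub Q hQ (hprime Q hQ)
    rw [← ht1 Q hQ] at this
    exact_mod_cast this
  have hteq : ∀ Q (hQ : Q ∈ PP) (hp : Q.IsPrime) (h : ℕ), primeHt Q hp = (h : ℕ∞) → h = hn Q := by
    intro Q hQ hp h hh
    have : ((hn Q : ℕ∞)) = (h : ℕ∞) := by rw [ht1 Q hQ]; exact hh
    exact_mod_cast this.symm
  -- incomparability of distinct elements of PP
  have hincomp : ∀ Q ∈ PP, ∀ Q' ∈ PP, Q' ≠ Q → ¬ (Q' ≤ Q) := by
    intro Q hQ Q' hQ' hne hle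
    have h2 := (hPPsub hQ).2 ⟨hprime Q' hQ', hIle Q' hQ'⟩ hle
    exact hne (le_antisymm hle h2)
  -- elements avoiding a prime in products
  have havoid : ∀ Q ∈ PP, ∀ (T : Finset (Ideal (MvPolynomial (Fin n) k)))
      (e : Ideal (MvPolynomial (Fin n) k) → Ideal (MvPolynomial (Fin n) k)),
      (∀ Q' ∈ T, ¬ (e Q' ≤ Q)) → ∃ u, u ∈ (∏ Q' ∈ T, e Q') ∧ u ∉ Q := by
    intro Q hQ T e hT
    have : ¬ ((∏ Q' ∈ T, e Q') ≤ Q) := by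
      intro hle
      obtain ⟨Q', hQ'T, hle'⟩ := ((hprime Q hQ).prod_le).mp hle
      exact hT Q' hQ'T hle'
    exact SetLike.not_le_iff_exists.mp this
  -- membership of g j in I
  have hgI : ∀ j, g j ∈ I := fun j => hg ▸ Ideal.subset_span ⟨j, rfl⟩
  -- MAIN INDUCTION
  have main : ∀ i : ℕ, ∃ F : Fin i → MvPolynomial (Fin n) k,
      (∀ j, F j ∈ I) ∧
      (∀ j : Fin i, ∀ Q ∈ PP, hn Q ≤ (j : ℕ) → F j ∈ Q * Q) ∧
      (∀ Q ∈ PP, ∃ (m : ℕ) (hle : m ≤ i), m = min i (hn Q) ∧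
        ∃ cols : Fin m → Fin n,
          Matrix.det (Matrix.of fun a b : Fin m =>
            pderiv (cols b) (F (Fin.castLE hle a))) ∉ Q) := by
    intro i
    induction i with
    | zero =>
      refine ⟨fun a => a.elim0, fun j => j.elim0, fun j => j.elim0, ?_⟩
      intro Q hQ
      refine ⟨0, le_refl 0, by omega, fun a => a.elim0, ?_⟩
      rw [Matrix.det_fin_zero]
      exact (Ideal.ne_top_iff_one Q).mp (hprime Q hQ).ne_top
    | succ i ih =>
      obtain ⟨F, hc1, hc2, hc3⟩ := ih
      set lowP : Ideal (MvPolynomial (Fin n) k) :=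
        ∏ Q' ∈ PPf.filter (fun Q' => hn Q' ≤ i), (Q' * Q') with hlowP
      have hlowPle : ∀ Q ∈ PP, hn Q ≤ i → lowP ≤ Q * Q := by
        intro Q hQ hle
        have hmem : Q ∈ PPf.filter (fun Q' => hn Q' ≤ i) := by
          rw [Finset.mem_filter]
          exact ⟨(hPPfmem Q).mpr hQ, hle⟩
        rw [hlowP, Finset.prod_eq_mul_prod_sdiff_singleton_of_mem hmem]
        exact Ideal.mul_le_left
      have avoid : ∀ T : Finset (Ideal (MvPolynomial (Fin n) k)),
          (∀ Q ∈ T, Q ∈ PP ∧ i + 1 ≤ hn Q) →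
          ∃ Fi, Fi ∈ I ∧ Fi ∈ lowP ∧ ∀ Q ∈ T,
            grad Q Fi ∉ Submodule.span (FractionRing (MvPolynomial (Fin n) k ⧸ Q))
              (Set.range (fun a : Fin i => grad Q (F a))) := by
        intro T
        induction T using Finset.induction_on with
        | empty => exact fun _ => ⟨0, I.zero_mem, lowP.zero_mem, by simp⟩
        | @insert Q₀ T hQ₀T ihT =>
          intro hT
          have hQ₀PP : Q₀ ∈ PP := (hT Q₀ (Finset.mem_insert_self _ _)).1
          have hQ₀ht : i + 1 ≤ hn Q₀ := (hT Q₀ (Finset.mem_insert_self _ _)).2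
          have hQ₀p : Q₀.IsPrime := hprime Q₀ hQ₀PP
          haveI := hQ₀p
          obtain ⟨F₀, hF₀I, hF₀lo, hF₀good⟩ := ihT
            (fun Q hQ => hT Q (Finset.mem_insert_of_mem hQ))
          set W := Submodule.span (FractionRing (MvPolynomial (Fin n) k ⧸ Q₀))
            (Set.range (fun a : Fin i => grad Q₀ (F a))) with hWdef
          -- some generator has gradient outside W
          have hgj : ∃ j : Fin t, grad Q₀ (g j) ∉ W := by
            by_contra hcon
            push_neg at hcon
            obtain ⟨rows, cols, hminor⟩ := hJht Q₀ hQ₀PP hQ₀p (hn Q₀) (ht1 Q₀ hQ₀PP).symm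
            have hind := (minor_iff_indep Q₀ hQ₀p (fun a => g (rows a))).mp ⟨cols, hminor⟩
            exact span_pigeonhole _ hind _ (by omega) (fun a => hcon (rows a))
          obtain ⟨j, hj⟩ := hgj
          -- u element in lowP outside Q₀
          obtain ⟨u, hulo, huQ₀⟩ : ∃ u, u ∈ lowP ∧ u ∉ Q₀ := by
            refine havoid Q₀ hQ₀PP _ _ ?_
            intro Q' hQ'
            rw [Finset.mem_filter] at hQ'
            have hQ'PP := (hPPfmem Q').mp hQ'.1
            have hQ'ne : Q' ≠ Q₀ := by
              intro he; rw [he] at hQ'; omega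
            intro hle
            rcases (hQ₀p.mul_le).mp hle with h' | h' <;>
              exact hincomp Q₀ hQ₀PP Q' hQ'PP hQ'ne h'
          set y := u * g j with hy
          have hyI : y ∈ I := Ideal.mul_mem_left _ _ (hgI j)
          have hylo : y ∈ lowP := Ideal.mul_mem_right _ _ hulo
          have hygood : grad Q₀ y ∉ W := by
            have hgjQ : g j ∈ Q₀ := hIle Q₀ hQ₀PP (hgI j)
            rw [hy, grad_mul_mem Q₀ hQ₀p u (g j) hgjQ]
            intro hmem
            apply hj
            have hu0 : resF Q₀ u ≠ 0 := fun h0 => huQ₀ ((resF_eq_zero_iff _ hQ₀p u).mp h0)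
            have h2 := W.smul_mem (resF Q₀ u)⁻¹ hmem
            rwa [smul_smul, inv_mul_cancel₀ hu0, one_smul] at h2
          by_cases hgood0 : grad Q₀ F₀ ∉ W
          · refine ⟨F₀, hF₀I, hF₀lo, ?_⟩
            intro Q hQmem
            rcases Finset.mem_insert.mp hQmem with rfl | hQT
            · exact hgood0
            · exact hF₀good Q hQT
          · push_neg at hgood0
            obtain ⟨c, hcT, hcQ₀⟩ : ∃ c, c ∈ (∏ Q' ∈ T, Q') ∧ c ∉ Q₀ := by
              refine havoid Q₀ hQ₀PP _ _ ?_
              intro Q' hQ'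
              have hQ'PP := (hT Q' (Finset.mem_insert_of_mem hQ')).1
              have hQ'ne : Q' ≠ Q₀ := fun he => hQ₀T (he ▸ hQ')
              exact hincomp Q₀ hQ₀PP Q' hQ'PP hQ'ne
            refine ⟨F₀ + c * y, I.add_mem hF₀I (I.mul_mem_left _ hyI),
              lowP.add_mem hF₀lo (lowP.mul_mem_left _ hylo), ?_⟩
            intro Q hQmem
            rcases Finset.mem_insert.mp hQmem with hQQ | hQT
            · -- Q = Q₀
              rw [hQQ]
              rw [grad_add, grad_mul_mem Q₀ hQ₀p c y (hIle Q₀ hQ₀PP hyI)]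
              intro hmem
              apply hygood
              have hc0 : resF Q₀ c ≠ 0 := fun h0 => hcQ₀ ((resF_eq_zero_iff _ hQ₀p c).mp h0)
              have h2 : resF Q₀ c • grad Q₀ y ∈ W := by
                have h3 := W.sub_mem hmem hgood0
                simpa using h3
              have h4 := W.smul_mem (resF Q₀ c)⁻¹ h2
              rwa [smul_smul, inv_mul_cancel₀ hc0, one_smul] at h4
            · -- Q ∈ T
              have hQPP := (hT Q (Finset.mem_insert_of_mem hQT)).1
              have hQp := hprime Q hQPP
              have hcQ : c ∈ Q := by
                have : (∏ Q' ∈ T, Q') ≤ Q := by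
                  rw [Finset.prod_eq_mul_prod_sdiff_singleton_of_mem hQT]
                  exact Ideal.mul_le_left
                exact this hcT
              rw [grad_add, grad_mul_mem Q hQp c y (hIle Q hQPP hyI),
                (resF_eq_zero_iff Q hQp c).mpr hcQ, zero_smul, add_zero]
              exact hF₀good Q hQT
      -- apply avoidance
      obtain ⟨Fi, hFiI, hFilo, hFigood⟩ := avoid (PPf.filter fun Q => i + 1 ≤ hn Q)
        (fun Q hQ => ⟨(hPPfmem Q).mp (Finset.mem_filter.mp hQ).1, (Finset.mem_filter.mp hQ).2⟩)
      refine ⟨Fin.snoc F Fi, ?_, ?_, ?_⟩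
      · intro j
        refine Fin.lastCases ?_ ?_ j
        · rw [Fin.snoc_last]; exact hFiI
        · intro j'; rw [Fin.snoc_castSucc]; exact hc1 j'
      · intro j
        refine Fin.lastCases ?_ (fun j' => ?_) j <;> intro Q hQ hle
        · rw [Fin.snoc_last]
          refine hlowPle Q hQ ?_ hFilo
          simpa using hle
        · rw [Fin.snoc_castSucc]
          exact hc2 j' Q hQ (by simpa using hle)
      · intro Q hQ
        have hQp := hprime Q hQ
        haveI := hQp
        by_cases hcase : i + 1 ≤ hn Q
        · -- extend the minor
          obtain ⟨m, hle, hmEq, cols, hdet⟩ := hc3 Q hQ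
          have hmi : m = i := by omega
          subst hmi
          have hindep : LinearIndependent (FractionRing (MvPolynomial (Fin n) k ⧸ Q))
              (fun a : Fin m => grad Q (F a)) := by
            have h5 := (minor_iff_indep Q hQp (fun a : Fin m => F (Fin.castLE hle a))).mp
              ⟨cols, hdet⟩
            have he : (fun a : Fin m => grad Q (F (Fin.castLE hle a)))
                = fun a : Fin m => grad Q (F a) := by
              funext a; congr 1
            rwa [he] at h5
          have hsnoc : LinearIndependent (FractionRing (MvPolynomial (Fin n) k ⧸ Q))
              (fun a : Fin (m + 1) => grad Q ((Fin.snoc F Fi : Fin (m + 1) → MvPolynomial (Fin n) k) a)) := by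
            have heq : (fun a : Fin (m + 1) => grad Q ((Fin.snoc F Fi : Fin (m + 1) → MvPolynomial (Fin n) k) a))
                = Fin.snoc (fun a : Fin m => grad Q (F a)) (grad Q Fi) := by
              funext a
              refine Fin.lastCases ?_ ?_ a
              · rw [Fin.snoc_last, Fin.snoc_last]
              · intro a'; rw [Fin.snoc_castSucc, Fin.snoc_castSucc]
            rw [heq, linearIndependent_fin_snoc]
            refine ⟨hindep, ?_⟩
            refine hFigood Q ?_
            rw [Finset.mem_filter]
            exact ⟨(hPPfmem Q).mpr hQ, hcase⟩
          obtain ⟨cols', hdet'⟩ := (minor_iff_indep Q hQp _).mpr hsnoc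
          refine ⟨m + 1, le_refl _, by omega, cols', ?_⟩
          exact hdet'
        · -- keep the old minor
          obtain ⟨m, hle, hmEq, cols, hdet⟩ := hc3 Q hQ
          refine ⟨m, le_trans hle (Nat.le_succ i), by omega, cols, ?_⟩
          have hM : (Matrix.of fun a b : Fin m =>
                pderiv (cols b) ((Fin.snoc F Fi : Fin (i+1) → MvPolynomial (Fin n) k)
                  (Fin.castLE (le_trans hle (Nat.le_succ i)) a)))
              = Matrix.of fun a b : Fin m => pderiv (cols b) (F (Fin.castLE hle a)) := by
            ext a b
            have h6 : Fin.castLE (le_trans hle (Nat.le_succ i)) a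
                = Fin.castSucc (Fin.castLE hle a) := rfl
            rw [Matrix.of_apply, Matrix.of_apply, h6, Fin.snoc_castSucc]
          rw [hM]
          exact hdet
  -- ASSEMBLY
  obtain ⟨F, hc1, hc2, hc3⟩ := main r
  refine ⟨t + r, Fin.append g F, ?_, Fin.natAdd t, ?_, ?_⟩
  · -- generation
    apply le_antisymm
    · rw [hg]
      apply Ideal.span_mono
      rintro _ ⟨j, rfl⟩
      exact ⟨Fin.castAdd r j, by rw [Fin.append_left]⟩
    · rw [Ideal.span_le]
      rintro _ ⟨x, rfl⟩
      refine Fin.addCases (fun j => ?_) (fun j => ?_) x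
      · rw [Fin.append_left]; exact hgI j
      · rw [Fin.append_right]; exact hc1 j
  · -- injectivity
    intro a b hab
    have := congrArg Fin.val hab
    simp only [Fin.natAdd] at this
    exact Fin.ext (by omega)
  · intro Q hQPP hQ h hht
    have hQp := hprime Q hQPP
    have hhn : h = hn Q := hteq Q hQPP hQ h hht
    subst hhn
    obtain ⟨m, hle, hmEq, cols, hdet⟩ := hc3 Q hQPP
    have hm : m = hn Q := by
      have := hnler Q hQPP; omega
    subst hm
    constructor
    · -- the minor of size hn Q
      refine ⟨fun a => Fin.castLE hle a, cols, ?_⟩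
      have hM : (Matrix.of fun a b : Fin (hn Q) =>
            pderiv (cols b) (Fin.append g F (Fin.natAdd t (Fin.castLE hle a))))
          = Matrix.of fun a b : Fin (hn Q) => pderiv (cols b) (F (Fin.castLE hle a)) := by
        ext a b
        rw [Matrix.of_apply, Matrix.of_apply, Fin.append_right]
      rw [hM]
      exact hdet
    · -- all (hn Q + 1)-minors vanish
      intro rows cols'
      by_cases hinj : Function.Injective rows
      · have hex : ∃ a, hn Q ≤ (rows a : ℕ) := by
          by_contra hcon
          push_neg at hcon
          have hinj2 : Function.Injective
              (fun a : Fin (hn Q + 1) => (⟨(rows a : ℕ), hcon a⟩ : Fin (hn Q))) := by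
            intro a b hab
            have h7 := hab
            simp only [Fin.mk.injEq] at h7
            exact hinj (Fin.ext h7)
          have := Fintype.card_le_of_injective _ hinj2
          simp at this
        obtain ⟨a, ha⟩ := hex
        apply det_mem_of_row Q _ a
        intro b
        show pderiv (cols' b) (Fin.append g F (Fin.natAdd t (rows a))) ∈ Q
        rw [Fin.append_right]
        exact pderiv_mem_of_mem_sq Q (hc2 (rows a) Q hQPP ha) _
      · rw [Function.not_injective_iff] at hinj
        obtain ⟨a, b, hab, hne⟩ := hinj
        have : Matrix.det (Matrix.of fun i j : Fin (hn Q + 1) =>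
            pderiv (cols' j) (Fin.append g F (Fin.natAdd t (rows i)))) = 0 := by
          apply Matrix.det_zero_of_row_eq hne
          funext c
          simp only [Matrix.of_apply, hab]
        rw [this]
        exact Q.zero_mem
end

section
/- Let k be a ring and A a finitely presented Noetherian k-algebra. Let J be an ideal of A with J·Der_k(A) ⊆ IDer_k(A) and let P be a minimal prime of J. Then P^N·Der_k(A_P) ⊆ IDer_k(A_P), where N is the minimal integer such that P^N ⊆ J·A_P. -/
open scoped BigOperators

section AuxHS
variable {k B : Type*} [CommRing k] [CommRing B] [Algebra k B]

/-- In an infinite HS derivation, `D n 1 = 0` for `n ≥ 1`. -/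
lemma IsHSDeriv.one_eq_zero {D : ℕ → B →ₗ[k] B} (hD : IsHSDeriv k B ⊤ D) :
    ∀ n : ℕ, 1 ≤ n → D n 1 = 0 := by
  intro n hn
  induction n using Nat.strong_induction_on with
  | _ n ih =>
    have h := hD.2 n le_top 1 1
    rw [mul_one] at h
    have hsplit : ∑ ij ∈ Finset.HasAntidiagonal.antidiagonal n, D ij.1 (1:B) * D ij.2 (1:B)
        = D n (1:B) + D n (1:B) := by
      rw [Finset.sum_eq_add_of_mem (a := ((0:ℕ), n)) (b := (n, (0:ℕ)))]
      · rw [hD.1]; simp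
      · simp
      · simp
      · intro h; exact absurd (congrArg Prod.fst h).symm (by simpa using Nat.one_le_iff_ne_zero.mp hn)
      · rintro ⟨i, j⟩ hc ⟨hca, hcb⟩
        have hij : i + j = n := Finset.HasAntidiagonal.mem_antidiagonal.mp hc
        have hi : 1 ≤ i := by
          rcases Nat.eq_zero_or_pos i with h0 | h1
          · exact absurd (by simp [h0, ← hij]) hca
          · exact h1
        have hilt : i < n := by
          rcases Nat.lt_or_ge i n with h | h
          · exact h
          · exfalso; apply hcb
            have h1 : i = n := le_antisymm (by omega) h
            have h2 : j = 0 := by omega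
            rw [h1, h2]
        rw [ih i hilt hi, zero_mul]
    rw [hsplit] at h
    have h2 : (D n) (1:B) + 0 = (D n) (1:B) + (D n) (1:B) := by rw [add_zero]; exact h
    exact (add_left_cancel h2).symm

/-- Integrable derivations are closed under scaling. -/
lemma IsIntegrable.smul {δ : Derivation k B B} (c : B)
    (h : IsIntegrable k B ⊤ δ) : IsIntegrable k B ⊤ (c • δ) := by
  obtain ⟨D, ⟨hD0, hDL⟩, hD1⟩ := h
  refine ⟨fun n => c ^ n • D n, ⟨?_, ?_⟩, ?_⟩
  · show c ^ 0 • D 0 = LinearMap.id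
    rw [pow_zero, one_smul, hD0]
  · intro α _ x y
    simp only [LinearMap.smul_apply]
    rw [hDL α le_top x y, Finset.smul_sum]
    refine Finset.sum_congr rfl fun ij hij => ?_
    have hsum : ij.1 + ij.2 = α := Finset.HasAntidiagonal.mem_antidiagonal.mp hij
    rw [← hsum, pow_add, smul_eq_mul, smul_eq_mul, smul_eq_mul]
    ring
  · show c ^ 1 • D 1 = _
    rw [pow_one, hD1]
    ext x
    simp [Derivation.coe_smul]

end AuxHS

section AuxLoc
open Function
set_option linter.unusedSectionVars false
variable {k A L : Type*} [CommRing k] [CommRing A] [Algebra k A]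
  [CommRing L] [Algebra A L] [Algebra k L] [IsScalarTower k A L]

lemma derivation_ext_of_localization (M : Submonoid A) [IsLocalization M L]
    {δ₁ δ₂ : Derivation k L L}
    (h : ∀ x : A, δ₁ (algebraMap A L x) = δ₂ (algebraMap A L x)) : δ₁ = δ₂ := by
  ext u
  obtain ⟨⟨x, s⟩, hu⟩ := IsLocalization.surj M u
  -- hu : u * algebraMap A L s = algebraMap A L x
  have h1 := congrArg δ₁ hu
  have h2 := congrArg δ₂ hu
  rw [Derivation.leibniz] at h1 h2
  rw [h x, h s] at h1
  have key : algebraMap A L s • (δ₁ u - δ₂ u) = 0 := by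
    rw [smul_sub]
    have := h1.trans h2.symm
    rw [sub_eq_zero]
    -- this : u • δ₂ (φ s) + φ s • δ₁ u = u • δ₂ (φ s) + φ s • δ₂ u
    exact add_left_cancel this
  have hunit : IsUnit (algebraMap A L (s : A)) := IsLocalization.map_units L s
  have h0 : algebraMap A L (s : A) • (δ₁ u - δ₂ u) = algebraMap A L (s : A) • (0 : L) := by
    rw [key, smul_zero]
  exact sub_eq_zero.mp (hunit.smul_left_cancel.mp h0)

/-- An integrable derivation on `A` localizes: if `δL` on `L` restricts to `δA`
on the image of `A`, and `δA` is `∞`-integrable, then so is `δL`. -/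
lemma isIntegrable_of_localization (M : Submonoid A) [IsLocalization M L]
    (δA : Derivation k A A) (δL : Derivation k L L)
    (hres : ∀ x : A, δL (algebraMap A L x) = algebraMap A L (δA x))
    (hint : IsIntegrable k A ⊤ δA) : IsIntegrable k L ⊤ δL := by
  classical
  obtain ⟨D, hD, hD1⟩ := hint
  set φ := algebraMap A L with hφ
  -- the ring hom `A →+* L⟦X⟧` given by `x ↦ ∑ φ (D n x) Xⁿ`
  have hone : ∀ n : ℕ, 1 ≤ n → D n 1 = 0 := hD.one_eq_zero
  let Φ : A →+* PowerSeries L :=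
    { toFun := fun x => PowerSeries.mk fun n => φ (D n x)
      map_one' := by
        ext n
        rcases Nat.eq_zero_or_pos n with h0 | h1
        · simp [h0, hD.1]
        · rw [PowerSeries.coeff_mk, hone n h1]
          simp [Nat.pos_iff_ne_zero.mp h1, PowerSeries.coeff_one]
      map_mul' := fun x y => by
        ext n
        rw [PowerSeries.coeff_mk, PowerSeries.coeff_mul, hD.2 n le_top x y, map_sum]
        exact Finset.sum_congr rfl fun ij _ => by rw [map_mul, PowerSeries.coeff_mk,
          PowerSeries.coeff_mk]
      map_zero' := by ext n; simp
      map_add' := fun x y => by ext n; simp }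
  have hΦcoeff : ∀ (x : A) (n : ℕ), PowerSeries.coeff n (Φ x) = φ (D n x) := fun x n => by
    show PowerSeries.coeff n (PowerSeries.mk fun m => φ (D m x)) = _
    rw [PowerSeries.coeff_mk]
  have hΦunits : ∀ s : M, IsUnit (Φ s) := by
    intro s
    rw [PowerSeries.isUnit_iff_constantCoeff]
    have : PowerSeries.constantCoeff (Φ s) = φ s := by
      rw [← PowerSeries.coeff_zero_eq_constantCoeff_apply, hΦcoeff, hD.1]; rfl
    rw [this]
    exact IsLocalization.map_units L s
  let Ψ : L →+* PowerSeries L := IsLocalization.lift (M := M) (S := L) hΦunits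
  have hΨφ : ∀ x : A, Ψ (φ x) = Φ x := fun x => IsLocalization.lift_eq hΦunits x
  -- constant coefficient of Ψ is the identity
  have hΨ0 : ∀ u : L, PowerSeries.constantCoeff (Ψ u) = u := by
    have : (PowerSeries.constantCoeff (R := L)).comp Ψ = RingHom.id L := by
      apply IsLocalization.ringHom_ext M
      ext x
      simp only [RingHom.coe_comp, Function.comp_apply, RingHom.id_apply]
      rw [hΨφ x, ← PowerSeries.coeff_zero_eq_constantCoeff_apply, hΦcoeff, hD.1]; rfl
    exact fun u => RingHom.congr_fun this u
  -- Ψ is k-linear in a suitable sense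
  have hΨsmul : ∀ (c : k) (u : L), Ψ (c • u) = PowerSeries.C (algebraMap k L c) * Ψ u := by
    intro c u
    rw [Algebra.smul_def, map_mul]
    congr 1
    rw [IsScalarTower.algebraMap_apply k A L, hΨφ]
    ext n
    rw [hΦcoeff]
    rcases Nat.eq_zero_or_pos n with h0 | h1
    · subst h0
      rw [hD.1]
      simp [← IsScalarTower.algebraMap_apply k A L]
      exact (IsScalarTower.algebraMap_apply k A L c).symm
    · have : D n (algebraMap k A c) = 0 := by
        rw [Algebra.algebraMap_eq_smul_one, map_smul, hone n h1, smul_zero]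
      rw [this, map_zero, PowerSeries.coeff_C]
      simp [Nat.pos_iff_ne_zero.mp h1]
  let E : ℕ → L →ₗ[k] L := fun n =>
    { toFun := fun u => PowerSeries.coeff n (Ψ u)
      map_add' := fun u v => by
        show PowerSeries.coeff n (Ψ (u + v)) = _
        rw [map_add, map_add]
      map_smul' := fun c u => by
        show PowerSeries.coeff n (Ψ (c • u)) = _
        rw [RingHom.id_apply, hΨsmul, PowerSeries.coeff_C_mul, Algebra.smul_def] }
  have hE : IsHSDeriv k L ⊤ E := by
    constructor
    · ext u
      show PowerSeries.coeff 0 (Ψ u) = u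
      rw [PowerSeries.coeff_zero_eq_constantCoeff_apply, hΨ0]
    · intro α _ x y
      show PowerSeries.coeff α (Ψ (x * y)) = _
      rw [map_mul, PowerSeries.coeff_mul]
      rfl
  -- `E 1` agrees with `δL`
  have hE1 : E 1 = δL.toLinearMap := by
    have hE1one : E 1 (1 : L) = 0 := by
      show PowerSeries.coeff 1 (Ψ 1) = 0
      rw [map_one, PowerSeries.coeff_one]
      simp
    have hE1leib : ∀ u v : L, E 1 (u * v) = u • E 1 v + v • E 1 u := by
      intro u v
      show PowerSeries.coeff 1 (Ψ (u * v)) = _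
      rw [map_mul, PowerSeries.coeff_mul]
      rw [show Finset.HasAntidiagonal.antidiagonal 1 = {(0,1),(1,0)} from rfl]
      rw [Finset.sum_insert (by decide), Finset.sum_singleton]
      rw [PowerSeries.coeff_zero_eq_constantCoeff_apply, hΨ0]
      rw [PowerSeries.coeff_zero_eq_constantCoeff_apply, hΨ0]
      simp only [smul_eq_mul]
      show u * (PowerSeries.coeff 1) (Ψ v) + (PowerSeries.coeff 1) (Ψ u) * v
        = u * (PowerSeries.coeff 1) (Ψ v) + v * (PowerSeries.coeff 1) (Ψ u)
      ring
    let δ₁ : Derivation k L L :=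
      { toLinearMap := E 1
        map_one_eq_zero' := hE1one
        leibniz' := hE1leib }
    have : δ₁ = δL := by
      apply derivation_ext_of_localization M
      intro x
      show E 1 (φ x) = δL (φ x)
      have : E 1 (φ x) = φ (D 1 x) := by
        show PowerSeries.coeff 1 (Ψ (φ x)) = _
        rw [hΨφ, hΦcoeff]
      rw [this, hD1, hres]
      rfl
    exact congrArg Derivation.toLinearMap this
  exact ⟨E, hE, hE1⟩

/-- Any derivation of a localization `L` of a finitely presented `k`-algebra `A` can be
"cleared of denominators": some multiple `φ s • d` restricts to a derivation of `A`. -/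
lemma exists_derivation_lift (M : Submonoid A) [IsLocalization M L]
    (hfp : Algebra.FinitePresentation k A) (d : Derivation k L L) :
    ∃ (s : M) (d' : Derivation k A A), ∀ x : A,
      algebraMap A L (s : A) * d (algebraMap A L x) = algebraMap A L (d' x) := by
  classical
  obtain ⟨n, π, hπsurj, hker⟩ := hfp.out
  obtain ⟨G, hG⟩ := hker
  set φ := algebraMap A L with hφdef
  -- set up the algebra structures from the presentation
  letI : Algebra (MvPolynomial (Fin n) k) A := π.toRingHom.toAlgebra
  letI : Algebra (MvPolynomial (Fin n) k) L := ((algebraMap A L).comp π.toRingHom).toAlgebra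
  haveI : IsScalarTower k (MvPolynomial (Fin n) k) A :=
    IsScalarTower.of_algebraMap_eq fun c => (π.commutes c).symm
  haveI : IsScalarTower (MvPolynomial (Fin n) k) A L :=
    IsScalarTower.of_algebraMap_eq fun p => rfl
  haveI : IsScalarTower k (MvPolynomial (Fin n) k) L :=
    IsScalarTower.of_algebraMap_eq fun c => by
      show algebraMap k L c = algebraMap A L (π (algebraMap k (MvPolynomial (Fin n) k) c))
      rw [π.commutes, ← IsScalarTower.algebraMap_apply]
  have halg : ∀ p : MvPolynomial (Fin n) k,
      algebraMap (MvPolynomial (Fin n) k) L p = φ (π p) := fun p => rfl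
  have halgA : ∀ p : MvPolynomial (Fin n) k,
      algebraMap (MvPolynomial (Fin n) k) A p = π p := fun p => rfl
  -- common denominator for the values of `d` on the generators
  obtain ⟨s₀, hs₀⟩ := IsLocalization.exist_integer_multiples M Finset.univ
    (fun i : Fin n => d (φ (π (MvPolynomial.X i))))
  choose av hav using fun i : Fin n => hs₀ i (Finset.mem_univ i)
  -- hav : φ (av i) = (s₀ : A) • d (φ (π (X i)))
  -- the derivation on the polynomial ring with values `av i`
  let Dpoly : Derivation k (MvPolynomial (Fin n) k) A := MvPolynomial.mkDerivation k av
  -- `φ` as an `MvPolynomial`-linear map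
  let φlin : A →ₗ[MvPolynomial (Fin n) k] L :=
    { toFun := φ
      map_add' := fun x y => map_add φ x y
      map_smul' := fun p x => by
        simp only [RingHom.id_apply]
        rw [Algebra.smul_def, Algebra.smul_def, halg, map_mul, halgA] }
  have key : ∀ g : MvPolynomial (Fin n) k,
      φ (Dpoly g) = φ (s₀ : A) * d (φ (π g)) := by
    have heq : φlin.compDer Dpoly = ((φ (s₀ : A)) • d).compAlgebraMap (MvPolynomial (Fin n) k) :=
      MvPolynomial.derivation_ext fun i => by
        show φ (Dpoly (MvPolynomial.X i)) =
          (φ (s₀ : A) • d) (algebraMap (MvPolynomial (Fin n) k) L (MvPolynomial.X i))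
        rw [halg]
        show φ (Dpoly (MvPolynomial.X i)) = φ (s₀ : A) • d (φ (π (MvPolynomial.X i)))
        rw [MvPolynomial.mkDerivation_X]
        rw [hav i, Algebra.smul_def, smul_eq_mul]
    intro g
    have := congrArg (fun D : Derivation k (MvPolynomial (Fin n) k) L => D g) heq
    exact this
  -- kill the finitely many obstructions
  have hkill : ∀ g ∈ G, ∃ t : M, (t : A) * Dpoly g = 0 := by
    intro g hg
    have hgker : π g = 0 := by
      have : g ∈ RingHom.ker π.toRingHom := hG ▸ Ideal.subset_span hg
      exact this
    have : φ (Dpoly g) = 0 := by rw [key g, hgker, map_zero, Derivation.map_zero, mul_zero]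
    exact (IsLocalization.map_eq_zero_iff M L _).mp this
  choose tfun htfun using hkill
  let t : M := ∏ g ∈ G.attach, tfun g.1 g.2
  have htkill : ∀ g ∈ G, (t : A) * Dpoly g = 0 := by
    intro g hg
    have hmem : (⟨g, hg⟩ : {x // x ∈ G}) ∈ G.attach := Finset.mem_attach _ _
    obtain ⟨c, hc⟩ := Finset.dvd_prod_of_mem (fun x : {x // x ∈ G} => tfun x.1 x.2) hmem
    have hc' : (t : A) = (tfun g hg : A) * (c : A) := by
      have h2 := congrArg (fun m : M => (m : A)) hc
      simp only [Submonoid.coe_mul] at h2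
      exact h2
    rw [hc', mul_comm (tfun g hg : A) (c : A), mul_assoc, htfun g hg, mul_zero]
  -- multiply the polynomial derivation by `t`
  let mulT : A →ₗ[MvPolynomial (Fin n) k] A :=
    { toFun := fun x => (t : A) * x
      map_add' := fun x y => mul_add _ x y
      map_smul' := fun p x => by
        simp only [RingHom.id_apply]
        rw [Algebra.smul_def, Algebra.smul_def]
        ring }
  let D2 : Derivation k (MvPolynomial (Fin n) k) A := mulT.compDer Dpoly
  have hD2 : ∀ g, D2 g = (t : A) * Dpoly g := fun g => rfl
  -- D2 vanishes on the kernel of π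
  have hD2ker : ∀ x ∈ RingHom.ker π.toRingHom, D2 x = 0 := by
    intro x hx
    rw [← hG] at hx
    refine (Submodule.span_induction
      (p := fun x _ => π x = 0 ∧ D2 x = 0) ?_ ?_ ?_ ?_ hx).2
    · intro g hg
      refine ⟨?_, by rw [hD2, htkill g hg]⟩
      have : g ∈ RingHom.ker π.toRingHom := hG ▸ Ideal.subset_span hg
      exact this
    · exact ⟨map_zero _, map_zero _⟩
    · rintro x y hx' hy' ⟨h1, h2⟩ ⟨h3, h4⟩
      exact ⟨by rw [map_add, h1, h3, add_zero], by rw [D2.map_add, h2, h4, add_zero]⟩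
    · rintro c x hx' ⟨h1, h2⟩
      constructor
      · rw [smul_eq_mul, map_mul, h1, mul_zero]
      · rw [smul_eq_mul, Derivation.leibniz, h2, smul_zero, zero_add, Algebra.smul_def,
          halgA, h1, zero_mul]
  -- descend to a derivation of A
  have hcongr : ∀ u w : MvPolynomial (Fin n) k, π u = π w → D2 u = D2 w := by
    intro u w h
    have : u - w ∈ RingHom.ker π.toRingHom := by
      rw [RingHom.mem_ker, map_sub]
      show π u - π w = 0
      rw [h, sub_self]
    have h0 := hD2ker _ this
    rw [map_sub] at h0
    exact sub_eq_zero.mp h0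
  let sec : A → MvPolynomial (Fin n) k := surjInv hπsurj
  have hsec : ∀ x, π (sec x) = x := fun x => surjInv_eq hπsurj x
  let d'lin : A →ₗ[k] A :=
    { toFun := fun x => D2 (sec x)
      map_add' := fun x y =>
        (hcongr (sec (x + y)) (sec x + sec y)
          (by rw [map_add, hsec, hsec, hsec])).trans (D2.map_add _ _)
      map_smul' := fun c x => by
        simp only [RingHom.id_apply]
        exact (hcongr (sec (c • x)) (c • sec x)
          (by rw [map_smul, hsec, hsec])).trans (D2.map_smul c _) }
  let d' : Derivation k A A :=
    { toLinearMap := d'lin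
      map_one_eq_zero' := by
        show D2 (sec 1) = 0
        rw [hcongr (sec 1) 1 (by rw [hsec, map_one]), Derivation.map_one_eq_zero]
      leibniz' := fun x y => by
        show D2 (sec (x * y)) = x • D2 (sec y) + y • D2 (sec x)
        rw [hcongr (sec (x * y)) (sec x * sec y) (by rw [map_mul, hsec, hsec, hsec]),
          Derivation.leibniz, smul_eq_mul, smul_eq_mul, Algebra.smul_def, Algebra.smul_def,
          halgA, halgA, hsec, hsec] }
  refine ⟨t * s₀, d', fun x => ?_⟩
  show φ ((t * s₀ : M) : A) * d (φ x) = φ (d'lin x)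
  show φ ((t : A) * (s₀ : A)) * d (φ x) = φ (D2 (sec x))
  rw [hD2, map_mul φ, map_mul φ, key (sec x), hsec]
  ring

end AuxLoc

/-- **Localization of integrability (Lemma 2.10).**  Let `k` be a ring and `A` a finitely
presented Noetherian `k`-algebra.  Let `J` be an ideal of `A` with
`J · Der_k(A) ⊆ IDer_k(A)`, and `P` a minimal prime of `J`.  Then, in the localization
`A_P` (here `L`, any realization of the localization of `A` at `P`),
`P^N · Der_k(A_P) ⊆ IDer_k(A_P)`, where `N` is the minimal integer with `P^N ⊆ J·A_P`. -/
theorem integrability_localizes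
    (k A : Type*) [CommRing k] [CommRing A] [Algebra k A]
    [IsNoetherianRing A] (hfp : Algebra.FinitePresentation k A)
    (J : Ideal A)
    (hJ : ∀ a ∈ J, ∀ d : Derivation k A A, IsIntegrable k A ⊤ (a • d))
    (P : Ideal A) [P.IsPrime] (hP : P ∈ J.minimalPrimes)
    (L : Type*) [CommRing L] [Algebra A L] [IsLocalization.AtPrime L P]
    [Algebra k L] [IsScalarTower k A L]
    (N : ℕ)
    (hN : (P.map (algebraMap A L)) ^ N ≤ J.map (algebraMap A L))
    (hNmin : ∀ N' : ℕ, N' < N →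
      ¬ ((P.map (algebraMap A L)) ^ N' ≤ J.map (algebraMap A L))) :
    ∀ a ∈ (P.map (algebraMap A L)) ^ N,
      ∀ d : Derivation k L L, IsIntegrable k L ⊤ (a • d) := by
  intro a ha d
  classical
  set φ := algebraMap A L with hφdef
  have haJ : a ∈ J.map (algebraMap A L) := hN ha
  obtain ⟨⟨j, s⟩, hjs⟩ := (IsLocalization.mem_map_algebraMap_iff P.primeCompl L).mp haJ
  -- hjs : a * φ s = φ j
  obtain ⟨s₀, d', hd'⟩ := exists_derivation_lift P.primeCompl hfp d
  have hint : IsIntegrable k A ⊤ ((j : A) • d') := hJ (j : A) j.2 d'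
  have hres : ∀ x : A, ((φ (j : A) * φ (s₀ : A)) • d) (φ x) = φ (((j : A) • d') x) := by
    intro x
    have h1 : ((φ (j : A) * φ (s₀ : A)) • d) (φ x) = φ (j : A) * (φ (s₀ : A) * d (φ x)) := by
      rw [Derivation.coe_smul]
      simp only [Pi.smul_apply, smul_eq_mul]
      ring
    rw [h1, hd' x]
    have h2 : ((j : A) • d') x = (j : A) * d' x := rfl
    rw [h2, map_mul]
  have hloc : IsIntegrable k L ⊤ ((φ (j : A) * φ (s₀ : A)) • d) :=
    isIntegrable_of_localization P.primeCompl ((j : A) • d')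
      ((φ (j : A) * φ (s₀ : A)) • d) hres hint
  have hus : IsUnit (φ (s : A)) := IsLocalization.map_units L s
  have hus₀ : IsUnit (φ (s₀ : A)) := IsLocalization.map_units L s₀
  have hrw : a • d = ((↑hus.unit⁻¹ * ↑hus₀.unit⁻¹ : L)) • ((φ (j : A) * φ (s₀ : A)) • d) := by
    rw [smul_smul]
    congr 1
    have hj : (φ (j : A) : L) = a * φ (s : A) := hjs.symm
    rw [hj]
    have e1 : (↑hus.unit⁻¹ : L) * φ (s : A) = 1 := IsUnit.val_inv_mul hus
    have e2 : (↑hus₀.unit⁻¹ : L) * φ (s₀ : A) = 1 := IsUnit.val_inv_mul hus₀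
    have e3 : (↑hus.unit⁻¹ * ↑hus₀.unit⁻¹ : L) * (a * φ (s : A) * φ (s₀ : A))
        = a * ((↑hus.unit⁻¹ : L) * φ (s : A)) * ((↑hus₀.unit⁻¹ : L) * φ (s₀ : A)) := by ring
    rw [e3, e1, e2, mul_one, mul_one]
  rw [hrw]
  exact IsIntegrable.smul _ hloc
end

section
/- Let k be a commutative ring of prime characteristic p containing 𝔽_p, and let A = k[x]/⟨x^{p^m}⟩ for a positive integer m. Then the derivation d/dx of A is (p^m − 1)-integrable but not p^m-integrable; in particular p^m ∈ Leap_k(A). -/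
open scoped BigOperators

open Classical in
noncomputable def hsQuot {k : Type*} [CommRing k] (I : Ideal (Polynomial k)) (i : ℕ) :
    (Polynomial k ⧸ I) →ₗ[k] (Polynomial k ⧸ I) :=
  if h : I.restrictScalars k ≤ LinearMap.ker
      ((Ideal.Quotient.mkₐ k I).toLinearMap ∘ₗ Polynomial.hasseDeriv i)
  then (Submodule.liftQ _ _ h) ∘ₗ
    ((Submodule.Quotient.restrictScalarsEquiv k (I : Submodule (Polynomial k) (Polynomial k))).symm :
      (Polynomial k ⧸ I) →ₗ[k] _)
  else 0

theorem hsQuot_mk {k : Type*} [CommRing k] (I : Ideal (Polynomial k)) (i : ℕ)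
    (h : ∀ f ∈ I, Polynomial.hasseDeriv i f ∈ I) (f : Polynomial k) :
    hsQuot I i (Ideal.Quotient.mk I f) = Ideal.Quotient.mk I (Polynomial.hasseDeriv i f) := by
  have h' : I.restrictScalars k ≤ LinearMap.ker
      ((Ideal.Quotient.mkₐ k I).toLinearMap ∘ₗ Polynomial.hasseDeriv i) := by
    intro x hx
    simp only [LinearMap.mem_ker, LinearMap.comp_apply, AlgHom.toLinearMap_apply,
      Ideal.Quotient.mkₐ_eq_mk, Ideal.Quotient.eq_zero_iff_mem]
    exact h x hx
  rw [hsQuot, dif_pos h']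
  rfl


set_option maxHeartbeats 1000000 in
set_option synthInstance.maxHeartbeats 200000 in
/-- **A leap at `p^m` (introduction example).**  Let `k` be a commutative ring of prime
characteristic `p` (so `k ⊇ 𝔽_p`) and `A = k[x]/⟨x^{p^m}⟩` with `m ≥ 1`.  Then the
derivation `d/dx` of `A` is `(p^m - 1)`-integrable but not `p^m`-integrable; in
particular `p^m ∈ Leap_k(A)`. -/
theorem leap_at_p_pow
    (k : Type*) [CommRing k] (p : ℕ) (hp : p.Prime) [CharP k p]
    (m : ℕ) (hm : 1 ≤ m)
    (I : Ideal (Polynomial k))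
    (hI : I = Ideal.span {(Polynomial.X : Polynomial k) ^ (p ^ m)}) :
    ∃ δ : Derivation k (Polynomial k ⧸ I) (Polynomial k ⧸ I),
      (∀ g : Polynomial k,
        δ (Ideal.Quotient.mk I g) = Ideal.Quotient.mk I (Polynomial.derivative g)) ∧
      IsIntegrable k (Polynomial k ⧸ I) ((p ^ m - 1 : ℕ) : ℕ∞) δ ∧
      ¬ IsIntegrable k (Polynomial k ⧸ I) ((p ^ m : ℕ) : ℕ∞) δ ∧
      (p ^ m) ∈ LeapSet k (Polynomial k ⧸ I) := by
  classical
  set q := p ^ m with hq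
  have hq2 : 2 ≤ q := le_trans hp.two_le (Nat.le_self_pow (by omega) p)
  have hq1 : 1 ≤ q := by omega
  -- Hasse derivatives of index < q preserve I
  have hpres : ∀ i < q, ∀ f ∈ I, Polynomial.hasseDeriv i f ∈ I := by
    intro i hi f hf
    rw [hI, Ideal.mem_span_singleton] at hf
    obtain ⟨g, rfl⟩ := hf
    rw [Polynomial.hasseDeriv_mul]
    apply Ideal.sum_mem
    rintro ⟨a, b⟩ hab
    rw [Finset.HasAntidiagonal.mem_antidiagonal] at hab
    rcases Nat.eq_zero_or_pos a with ha | ha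
    · subst ha
      rw [Polynomial.hasseDeriv_zero']
      rw [hI]
      exact Ideal.mul_mem_right _ _ (Ideal.subset_span rfl)
    · have hch : ((q.choose a : k)) = 0 := by
        have hdvd : p ∣ q.choose a := by
          refine Nat.Prime.dvd_choose_pow hp (by omega) (by omega)
        exact (CharP.cast_eq_zero_iff k p _).mpr hdvd
      have : Polynomial.hasseDeriv a ((Polynomial.X : Polynomial k) ^ q) = 0 := by
        rw [Polynomial.X_pow_eq_monomial, Polynomial.hasseDeriv_monomial, hch]
        simp
      rw [this, zero_mul]
      exact Ideal.zero_mem I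
  have hDmk : ∀ i < q, ∀ f : Polynomial k,
      hsQuot I i (Ideal.Quotient.mk I f) = Ideal.Quotient.mk I (Polynomial.hasseDeriv i f) :=
    fun i hi f => hsQuot_mk I i (hpres i hi) f
  have hHS0 : hsQuot I 0 = LinearMap.id := by
    apply LinearMap.ext
    intro a
    obtain ⟨f, rfl⟩ := Ideal.Quotient.mk_surjective a
    rw [hDmk 0 (by omega) f, Polynomial.hasseDeriv_zero']
    rfl
  have hLeibQ : ∀ α < q, ∀ x y : Polynomial k ⧸ I,
      hsQuot I α (x * y)
        = ∑ ij ∈ Finset.HasAntidiagonal.antidiagonal α, hsQuot I ij.1 x * hsQuot I ij.2 y := by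
    intro α hα x y
    obtain ⟨f, rfl⟩ := Ideal.Quotient.mk_surjective x
    obtain ⟨g, rfl⟩ := Ideal.Quotient.mk_surjective y
    rw [← map_mul, hDmk α hα, Polynomial.hasseDeriv_mul, map_sum]
    refine Finset.sum_congr rfl ?_
    rintro ⟨a, b⟩ hab
    rw [Finset.HasAntidiagonal.mem_antidiagonal] at hab
    rw [map_mul, hDmk a (by omega), hDmk b (by omega)]
  -- the derivation d/dx
  have hone0 : hsQuot I 1 (1 : Polynomial k ⧸ I) = 0 := by
    rw [show (1 : Polynomial k ⧸ I) = Ideal.Quotient.mk I 1 from rfl,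
      hDmk 1 (by omega), Polynomial.hasseDeriv_one']
    simp
  have hleib : ∀ a b : Polynomial k ⧸ I,
      hsQuot I 1 (a * b) = a • hsQuot I 1 b + b • hsQuot I 1 a := by
    intro a b
    obtain ⟨f, rfl⟩ := Ideal.Quotient.mk_surjective a
    obtain ⟨g, rfl⟩ := Ideal.Quotient.mk_surjective b
    rw [← map_mul, hDmk 1 (by omega), Polynomial.hasseDeriv_one',
      hDmk 1 (by omega), hDmk 1 (by omega), Polynomial.hasseDeriv_one',
      Polynomial.hasseDeriv_one', smul_eq_mul, smul_eq_mul, ← map_mul, ← map_mul, ← map_add,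
      Polynomial.derivative_mul]
    congr 1
    ring
  set δ : Derivation k (Polynomial k ⧸ I) (Polynomial k ⧸ I) :=
    { toLinearMap := hsQuot I 1
      map_one_eq_zero' := hone0
      leibniz' := hleib } with hδdef
  have hδmk : ∀ g : Polynomial k,
      δ (Ideal.Quotient.mk I g) = Ideal.Quotient.mk I (Polynomial.derivative g) := by
    intro g
    show hsQuot I 1 (Ideal.Quotient.mk I g) = _
    rw [hDmk 1 (by omega) g, Polynomial.hasseDeriv_one']
  have hInt : IsIntegrable k (Polynomial k ⧸ I) ((q - 1 : ℕ) : ℕ∞) δ := by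
    refine ⟨hsQuot I, ⟨hHS0, ?_⟩, rfl⟩
    intro α hα x y
    have : α ≤ q - 1 := by exact_mod_cast hα
    exact hLeibQ α (by omega) x y
  have hNot : ¬ IsIntegrable k (Polynomial k ⧸ I) ((q : ℕ) : ℕ∞) δ := by
    rintro ⟨D, ⟨hD0, hLeib⟩, hD1⟩
    set t : Polynomial k ⧸ I := Ideal.Quotient.mk I Polynomial.X with htdef
    have htq : t ^ q = 0 := by
      rw [htdef, ← map_pow, Ideal.Quotient.eq_zero_iff_mem, hI]
      exact Ideal.subset_span rfl
    set J : Ideal (Polynomial k ⧸ I) := Ideal.span {t} with hJ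
    set π := Ideal.Quotient.mk J with hπ
    have hπt : π t = 0 := Ideal.Quotient.eq_zero_iff_mem.mpr (Ideal.subset_span rfl)
    have hπD1 : π (D 1 t) = 1 := by
      rw [hD1]
      show π ((hsQuot I 1) t) = 1
      rw [htdef, hDmk 1 (by omega), Polynomial.hasseDeriv_one', Polynomial.derivative_X,
        map_one, map_one]
    have key : ∀ s : ℕ, s ≤ q → ∀ b ≤ s, π (D b (t ^ s)) = if b = s then 1 else 0 := by
      intro s
      induction s with
      | zero =>
        intro _ b hb
        have hb0 : b = 0 := by omega
        subst hb0
        rw [pow_zero, hD0]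
        simp
      | succ s ih =>
        intro hs b hb
        have hcast : (b : ℕ∞) ≤ ((q : ℕ) : ℕ∞) := by exact_mod_cast le_trans hb hs
        rw [pow_succ', hLeib b hcast t (t ^ s), map_sum]
        have hterm : ∀ ij ∈ Finset.HasAntidiagonal.antidiagonal b,
            π (D ij.1 t * D ij.2 (t ^ s)) = if ij = ((1 : ℕ), s) then 1 else 0 := by
          rintro ⟨a, c⟩ hac
          rw [Finset.HasAntidiagonal.mem_antidiagonal] at hac
          rw [map_mul]
          rcases Nat.lt_or_ge a 2 with ha | ha
          · interval_cases a
            · rw [hD0]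
              simp only [LinearMap.id_coe, id_eq]
              rw [hπt, zero_mul (π ((D c) (t ^ s)))]
              have : ((0 : ℕ), c) ≠ ((1 : ℕ), s) := by simp
              rw [if_neg this]
            · rw [hπD1, one_mul (π ((D (1, c).2) (t ^ s))), ih (by omega) c (by omega)]
              by_cases hcs : c = s
              · subst hcs; simp
              · rw [if_neg hcs, if_neg (by simp [hcs])]
          · have hcs : c < s := by omega
            rw [ih (by omega) c (by omega), if_neg (by omega), mul_zero (π ((D (a, c).1) t)),
              if_neg (by simp; omega)]
        rw [Finset.sum_congr rfl hterm, Finset.sum_ite_eq' (Finset.HasAntidiagonal.antidiagonal b) ((1 : ℕ), s)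
          (fun _ => (1 : (Polynomial k ⧸ I) ⧸ J))]
        by_cases hbs : b = s + 1
        · subst hbs
          rw [if_pos (Finset.HasAntidiagonal.mem_antidiagonal.mpr (by omega)), if_pos rfl]
        · rw [if_neg (fun hmem => hbs (by
            have := Finset.HasAntidiagonal.mem_antidiagonal.mp hmem; omega)), if_neg hbs]
    have h1 : π (D q (t ^ q)) = 1 := by
      rw [key q le_rfl q le_rfl, if_pos rfl]
    rw [htq, map_zero, map_zero] at h1
    -- 0 = 1 in the quotient, so 1 ∈ J
    have h1J : (1 : Polynomial k ⧸ I) ∈ J := by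
      rw [← Ideal.Quotient.eq_zero_iff_mem (I := J), map_one]
      exact h1.symm
    obtain ⟨c, hc⟩ := Ideal.mem_span_singleton.mp h1J
    obtain ⟨f, rfl⟩ := Ideal.Quotient.mk_surjective c
    have hmem : (1 : Polynomial k) - Polynomial.X * f ∈ I := by
      rw [← Ideal.Quotient.eq_zero_iff_mem, map_sub, map_mul, map_one, sub_eq_zero]
      exact hc
    rw [hI, Ideal.mem_span_singleton] at hmem
    obtain ⟨g, hg⟩ := hmem
    have := congrArg (Polynomial.eval 0) hg
    simp [zero_pow (show q ≠ 0 by omega)] at this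
    exact absurd ((CharP.cast_eq_zero_iff k p 1).mp (by simpa using this)) (by
      rw [Nat.dvd_one]; exact hp.ne_one)
  exact ⟨δ, hδmk, hInt, hNot, ⟨hq2, δ, hInt, hNot⟩⟩
end
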